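/- arXiv:1603.03940 — 7 statements merged into one kernel-verified Lean document; each statement's English description precedes it below -/
import Mathlib

section
/- With notation as above, assume additionally that every connecting map φ_{n+1} is +directional: (u,v),(u,v') ∈ E_{n+1} implies φ_{n+1}(v) = φ_{n+1}(v'). Then the relation E_X on the inverse limit X is the graph of a function, i.e. for every x ∈ X there is a unique y ∈ X with (x,y) ∈ E_X, and the resulting map f : X → X is continuous and surjective. -/
/-- If additionally each bonding map is +directional, the relation on the inverse
limit is the graph of a function, which is continuous and surjective. -/
theorem stmt2 (V : ℕ → Type) [∀ n, Fintype (V n)] [∀ n, Nonempty (V n)]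
    [∀ n, TopologicalSpace (V n)] [∀ n, DiscreteTopology (V n)]
    (E : ∀ n, Set (V n × V n))
    (hsurj : ∀ n (v : V n), (∃ u, (u, v) ∈ E n) ∧ (∃ w, (v, w) ∈ E n))
    (φ : ∀ n, V (n + 1) → V n)
    (hhom : ∀ n (u v : V (n + 1)), (u, v) ∈ E (n + 1) → (φ n u, φ n v) ∈ E n)
    (hedge : ∀ n (e : V n × V n), e ∈ E n →
      ∃ e' ∈ E (n + 1), (φ n e'.1, φ n e'.2) = e)
    (hdir : ∀ n (u v v' : V (n + 1)), (u, v) ∈ E (n + 1) → (u, v') ∈ E (n + 1) →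
      φ n v = φ n v') :
    (∀ x : {x : ∀ n, V n // ∀ n, φ n (x (n + 1)) = x n},
      ∃! y : {x : ∀ n, V n // ∀ n, φ n (x (n + 1)) = x n},
        ∀ n, (x.1 n, y.1 n) ∈ E n) ∧
    (∃ f : {x : ∀ n, V n // ∀ n, φ n (x (n + 1)) = x n} →
        {x : ∀ n, V n // ∀ n, φ n (x (n + 1)) = x n},
      Continuous f ∧ Function.Surjective f ∧
        ∀ x, ∀ n, (x.1 n, (f x).1 n) ∈ E n) := by
  classical
  choose pred hpred using fun n (v : V n) => (hsurj n v).1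
  choose succ hsucc using fun n (v : V n) => (hsurj n v).2
  -- φ is surjective
  have hφsurj : ∀ n (v : V n), ∃ u : V (n + 1), φ n u = v := by
    intro n v
    obtain ⟨e', he', heq⟩ := hedge n (pred n v, v) (hpred n v)
    exact ⟨e'.2, congrArg Prod.snd heq⟩
  choose ψ hψ using hφsurj
  -- every vertex lies on a full thread
  have thread : ∀ n (u : V n), ∃ x : ∀ m, V m,
      (∀ m, φ m (x (m + 1)) = x m) ∧ x n = u := by
    intro n
    induction n with
    | zero =>
      intro u
      exact ⟨fun m => Nat.rec u (fun m xm => ψ m xm) m, fun m => hψ m _, rfl⟩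
    | succ n ih =>
      intro u
      obtain ⟨x, hx, hxn⟩ := ih (φ n u)
      let g : ∀ m, V m := fun m => Nat.rec (x 0)
        (fun m prev => if h : m < n then x (m + 1) else
          if h2 : m = n then (by rw [h2]; exact u : V (m + 1)) else ψ m prev) m
      have hglow : ∀ m, m ≤ n → g m = x m := by
        intro m hm
        cases m with
        | zero => rfl
        | succ m =>
          show (if h : m < n then x (m + 1) else
            if h2 : m = n then _ else ψ m (g m)) = x (m + 1)
          rw [dif_pos (Nat.lt_of_succ_le hm)]
      have hgn1 : g (n + 1) = u := by
        show (if h : n < n then x (n + 1) else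
          if h2 : n = n then _ else ψ n (g n)) = u
        rw [dif_neg (Nat.lt_irrefl n), dif_pos rfl]
        rfl
      have hghigh : ∀ m, n < m → g (m + 1) = ψ m (g m) := by
        intro m hm
        show (if h : m < n then x (m + 1) else
          if h2 : m = n then _ else ψ m (g m)) = ψ m (g m)
        rw [dif_neg (Nat.lt_asymm hm), dif_neg (Nat.ne_of_gt hm)]
      refine ⟨g, ?_, hgn1⟩
      intro m
      rcases lt_trichotomy m n with h | h | h
      · rw [hglow (m + 1) h, hglow m h.le]
        exact hx m
      · subst h
        rw [hgn1, hglow m le_rfl, hxn]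
      · rw [hghigh m h]
        exact hψ m (g m)
  -- the function f
  have hFcompat : ∀ x : {x : ∀ n, V n // ∀ n, φ n (x (n + 1)) = x n}, ∀ n,
      φ n (φ (n + 1) (succ (n + 2) (x.1 (n + 2)))) = φ n (succ (n + 1) (x.1 (n + 1))) := by
    intro x n
    have h1 : (x.1 (n + 1), φ (n + 1) (succ (n + 2) (x.1 (n + 2)))) ∈ E (n + 1) := by
      have := hhom (n + 1) _ _ (hsucc (n + 2) (x.1 (n + 2)))
      rwa [x.2 (n + 1)] at this
    exact hdir n _ _ _ h1 (hsucc (n + 1) (x.1 (n + 1)))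
  let f : {x : ∀ n, V n // ∀ n, φ n (x (n + 1)) = x n} →
      {x : ∀ n, V n // ∀ n, φ n (x (n + 1)) = x n} :=
    fun x => ⟨fun n => φ n (succ (n + 1) (x.1 (n + 1))), hFcompat x⟩
  have hfe : ∀ x, ∀ n, (x.1 n, (f x).1 n) ∈ E n := by
    intro x n
    have := hhom n _ _ (hsucc (n + 1) (x.1 (n + 1)))
    rwa [x.2 n] at this
  have huniq : ∀ x y, (∀ n, (x.1 n, y.1 n) ∈ E n) → y = f x := by
    intro x y h
    apply Subtype.ext
    funext n
    have h2 := hdir n _ _ _ (h (n + 1)) (hsucc (n + 1) (x.1 (n + 1)))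
    show y.1 n = φ n (succ (n + 1) (x.1 (n + 1)))
    exact (y.2 n).symm.trans h2
  have hcont : Continuous f := by
    refine Continuous.subtype_mk ?_ _
    apply continuous_pi
    intro n
    exact (continuous_of_discreteTopology
      (f := fun v : V (n + 1) => φ n (succ (n + 1) v))).comp
      ((continuous_apply (n + 1)).comp continuous_subtype_val)
  -- compactness of the inverse limit
  have hXclosed : IsClosed {x : ∀ n, V n | ∀ n, φ n (x (n + 1)) = x n} := by
    have heq : {x : ∀ n, V n | ∀ n, φ n (x (n + 1)) = x n} =
        ⋂ n, {x : ∀ n, V n | φ n (x (n + 1)) = x n} := by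
      ext x; simp [Set.mem_iInter]
    rw [heq]
    exact isClosed_iInter fun n => isClosed_eq
      ((continuous_of_discreteTopology (f := φ n)).comp (continuous_apply (n + 1)))
      (continuous_apply n)
  have hXcompact : CompactSpace {x : ∀ n, V n // ∀ n, φ n (x (n + 1)) = x n} :=
    isCompact_iff_compactSpace.mp hXclosed.isCompact
  -- surjectivity
  have hfsurj : Function.Surjective f := by
    intro y
    let K : ℕ → Set {x : ∀ n, V n // ∀ n, φ n (x (n + 1)) = x n} :=
      fun n => {x | (f x).1 n = y.1 n}
    have hKne : ∀ n, (K n).Nonempty := by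
      intro n
      obtain ⟨xf, hcompat, hxn⟩ := thread (n + 1) (pred (n + 1) (y.1 (n + 1)))
      refine ⟨⟨xf, hcompat⟩, ?_⟩
      show φ n (succ (n + 1) (xf (n + 1))) = y.1 n
      rw [hxn]
      have h2 := hdir n _ _ _ (hsucc (n + 1) (pred (n + 1) (y.1 (n + 1))))
        (hpred (n + 1) (y.1 (n + 1)))
      exact h2.trans (y.2 n)
    have hKclosed : ∀ n, IsClosed (K n) :=
      fun n => isClosed_eq ((continuous_apply n).comp
        (continuous_subtype_val.comp hcont)) continuous_const
    have hKmono : ∀ n, K (n + 1) ⊆ K n := by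
      intro n x hx
      have hx' : (f x).1 (n + 1) = y.1 (n + 1) := hx
      show (f x).1 n = y.1 n
      rw [← (f x).2 n, hx', y.2 n]
    obtain ⟨x, hx⟩ := IsCompact.nonempty_iInter_of_sequence_nonempty_isCompact_isClosed
      K hKmono hKne (hKclosed 0).isCompact hKclosed
    exact ⟨x, Subtype.ext (funext fun n => Set.mem_iInter.mp hx n)⟩
  constructor
  · intro x
    exact ⟨f x, hfe x, fun z hz => huniq x z hz⟩
  · exact ⟨f, hcont, hfsurj, hfe⟩
end

section
/- With the same setup, if moreover every connecting map φ_{n+1} is bidirectional (both +directional and −directional: (u,v),(u',v) ∈ E_{n+1} implies φ_{n+1}(u) = φ_{n+1}(u')), then the induced map f : X → X on the inverse limit is a homeomorphism. -/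
section Aux

variable {V : ℕ → Type} (E : ∀ n, Set (V n × V n))
  (hsurj : ∀ n (v : V n), (∃ u, (u, v) ∈ E n) ∧ (∃ w, (v, w) ∈ E n))
  (φ : ∀ n, V (n + 1) → V n)

/-- The successor map on sequences. -/
noncomputable def fsucc (x : ∀ n, V n) (n : ℕ) : V n :=
  φ n (Classical.choose (hsurj (n + 1) (x (n + 1))).2)

/-- The predecessor map on sequences. -/
noncomputable def gpred (x : ∀ n, V n) (n : ℕ) : V n :=
  φ n (Classical.choose (hsurj (n + 1) (x (n + 1))).1)

theorem fsucc_edge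
    (hhom : ∀ n (u v : V (n + 1)), (u, v) ∈ E (n + 1) → (φ n u, φ n v) ∈ E n) (x : ∀ n, V n) (hx : ∀ n, φ n (x (n + 1)) = x n) (n : ℕ) :
    (x n, fsucc E hsurj φ x n) ∈ E n := by
  have h := Classical.choose_spec (hsurj (n + 1) (x (n + 1))).2
  have := hhom n _ _ h
  rwa [hx n] at this

theorem gpred_edge
    (hhom : ∀ n (u v : V (n + 1)), (u, v) ∈ E (n + 1) → (φ n u, φ n v) ∈ E n)
    (x : ∀ n, V n) (hx : ∀ n, φ n (x (n + 1)) = x n) (n : ℕ) :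
    (gpred E hsurj φ x n, x n) ∈ E n := by
  have h := Classical.choose_spec (hsurj (n + 1) (x (n + 1))).1
  have := hhom n _ _ h
  rwa [hx n] at this

theorem fsucc_compat
    (hhom : ∀ n (u v : V (n + 1)), (u, v) ∈ E (n + 1) → (φ n u, φ n v) ∈ E n)
    (hdirp : ∀ n (u v v' : V (n + 1)), (u, v) ∈ E (n + 1) → (u, v') ∈ E (n + 1) →
      φ n v = φ n v')
    (x : ∀ n, V n) (hx : ∀ n, φ n (x (n + 1)) = x n) (n : ℕ) :
    φ n (fsucc E hsurj φ x (n + 1)) = fsucc E hsurj φ x n := by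
  have h1 : (x (n + 1), fsucc E hsurj φ x (n + 1)) ∈ E (n + 1) :=
    fsucc_edge E hsurj φ hhom x hx (n + 1)
  have h2 := Classical.choose_spec (hsurj (n + 1) (x (n + 1))).2
  exact hdirp n _ _ _ h1 h2

theorem gpred_compat
    (hhom : ∀ n (u v : V (n + 1)), (u, v) ∈ E (n + 1) → (φ n u, φ n v) ∈ E n)
    (hdirm : ∀ n (u u' v : V (n + 1)), (u, v) ∈ E (n + 1) → (u', v) ∈ E (n + 1) →
      φ n u = φ n u')
    (x : ∀ n, V n) (hx : ∀ n, φ n (x (n + 1)) = x n) (n : ℕ) :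
    φ n (gpred E hsurj φ x (n + 1)) = gpred E hsurj φ x n := by
  have h1 : (gpred E hsurj φ x (n + 1), x (n + 1)) ∈ E (n + 1) :=
    gpred_edge E hsurj φ hhom x hx (n + 1)
  have h2 := Classical.choose_spec (hsurj (n + 1) (x (n + 1))).1
  exact hdirm n _ _ _ h1 h2

end Aux

/-- If moreover all bonding maps are bidirectional, the induced map on the inverse
limit is a homeomorphism. -/
theorem stmt3 (V : ℕ → Type) [∀ n, Fintype (V n)] [∀ n, Nonempty (V n)]
    [∀ n, TopologicalSpace (V n)] [∀ n, DiscreteTopology (V n)]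
    (E : ∀ n, Set (V n × V n))
    (hsurj : ∀ n (v : V n), (∃ u, (u, v) ∈ E n) ∧ (∃ w, (v, w) ∈ E n))
    (φ : ∀ n, V (n + 1) → V n)
    (hhom : ∀ n (u v : V (n + 1)), (u, v) ∈ E (n + 1) → (φ n u, φ n v) ∈ E n)
    (hedge : ∀ n (e : V n × V n), e ∈ E n →
      ∃ e' ∈ E (n + 1), (φ n e'.1, φ n e'.2) = e)
    (hdirp : ∀ n (u v v' : V (n + 1)), (u, v) ∈ E (n + 1) → (u, v') ∈ E (n + 1) →
      φ n v = φ n v')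
    (hdirm : ∀ n (u u' v : V (n + 1)), (u, v) ∈ E (n + 1) → (u', v) ∈ E (n + 1) →
      φ n u = φ n u') :
    ∃ F : {x : ∀ n, V n // ∀ n, φ n (x (n + 1)) = x n} ≃ₜ
        {x : ∀ n, V n // ∀ n, φ n (x (n + 1)) = x n},
      ∀ x, ∀ n, (x.1 n, (F x).1 n) ∈ E n := by
  set X := {x : ∀ n, V n // ∀ n, φ n (x (n + 1)) = x n}
  let f : X → X := fun x => ⟨fsucc E hsurj φ x.1, fsucc_compat E hsurj φ hhom hdirp x.1 x.2⟩
  let g : X → X := fun x => ⟨gpred E hsurj φ x.1, gpred_compat E hsurj φ hhom hdirm x.1 x.2⟩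
  have hgf : ∀ x : X, g (f x) = x := by
    intro x
    ext n
    show φ n (Classical.choose (hsurj (n + 1) (fsucc E hsurj φ x.1 (n + 1))).1) = x.1 n
    have h1 := Classical.choose_spec (hsurj (n + 1) (fsucc E hsurj φ x.1 (n + 1))).1
    have h2 : (x.1 (n + 1), fsucc E hsurj φ x.1 (n + 1)) ∈ E (n + 1) :=
      fsucc_edge E hsurj φ hhom x.1 x.2 (n + 1)
    rw [hdirm n _ _ _ h1 h2, x.2 n]
  have hfg : ∀ x : X, f (g x) = x := by
    intro x
    ext n
    show φ n (Classical.choose (hsurj (n + 1) (gpred E hsurj φ x.1 (n + 1))).2) = x.1 n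
    have h1 := Classical.choose_spec (hsurj (n + 1) (gpred E hsurj φ x.1 (n + 1))).2
    have h2 : (gpred E hsurj φ x.1 (n + 1), x.1 (n + 1)) ∈ E (n + 1) :=
      gpred_edge E hsurj φ hhom x.1 x.2 (n + 1)
    rw [hdirp n _ _ _ h1 h2, x.2 n]
  have hfc : Continuous f := by
    refine Continuous.subtype_mk (continuous_pi fun n => ?_) _
    show Continuous ((fun v : V (n + 1) => φ n (Classical.choose (hsurj (n + 1) v).2)) ∘
      fun x : X => x.1 (n + 1))
    exact Continuous.comp continuous_of_discreteTopology
      ((continuous_apply (n + 1)).comp continuous_subtype_val)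
  have hgc : Continuous g := by
    refine Continuous.subtype_mk (continuous_pi fun n => ?_) _
    show Continuous ((fun v : V (n + 1) => φ n (Classical.choose (hsurj (n + 1) v).1)) ∘
      fun x : X => x.1 (n + 1))
    exact Continuous.comp continuous_of_discreteTopology
      ((continuous_apply (n + 1)).comp continuous_subtype_val)
  refine ⟨⟨⟨f, g, hgf, hfg⟩, hfc, hgc⟩, fun x n => ?_⟩
  exact fsucc_edge E hsurj φ hhom x.1 x.2 n
end

section
/- Let (X,f) be a compact metrizable zero-dimensional homeomorphic system, L ≥ 1 an integer, and ε > 0. Suppose (X,f) admits, for the sequence ℓ_n := L + n, an (ℓ_n)-periodicity-regulated decomposition at some level: i.e., X is partitioned into finitely many disjoint towers f^i(B_e), e ∈ E, 0 ≤ i < l(e), each floor of diameter ≤ ε, such that every tower of height l(e) ≤ L contains a periodic point of least period l(e). Then there exists a clopen set F ⊆ X such that f^i(F), 0 ≤ i ≤ L, are pairwise disjoint, and every x ∉ ⋃_{-L ≤ i ≤ L} f^i(F) lies within distance ε of a periodic point of period ≤ L. -/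
/-!
Mark, in every tower of height greater than `L`, the floors whose distance to the top of the
tower is a positive multiple of `L + 1`. The union `F` of the marked floors is clopen, and
two marked floors of one tower are at least `L + 1` apart, so `f^i(F)`, `0 ≤ i ≤ L`, are
pairwise disjoint. As the topmost marked floor lies `L + 1` below the top and the lowest
one at most `L` above the base, every floor of a tall tower is within `L` of a marked floor.
The floors of the short towers are not reached, but each of them contains an image of the
periodic point of its tower, which is a periodic point of period at most `L` within the
diameter of the floor.
-/

open Function Set

lemma IsClopen.image_iterate_homeomorph {X : Type*} [TopologicalSpace X] (f : X ≃ₜ X)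
    {s : Set X} (hs : IsClopen s) (n : ℕ) : IsClopen ((f : X → X)^[n] '' s) := by
  rw [image_eq_preimage_of_inverse
    (LeftInverse.iterate f.symm_apply_apply n) (RightInverse.iterate f.apply_symm_apply n)]
  exact hs.preimage (f.symm.continuous.iterate n)

lemma Equiv.Perm.zpow_sub_apply_iterate {X : Type*} (σ : Equiv.Perm X) (m s : ℕ) (x : X) :
    (σ ^ ((m : ℤ) - s)) (σ^[s] x) = σ^[m] x := by
  rw [← Equiv.Perm.coe_pow, ← zpow_natCast, ← Equiv.Perm.mul_apply, ← zpow_add,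
    sub_add_cancel, zpow_natCast, Equiv.Perm.coe_pow]

lemma Function.Injective.exists_isPeriodicPt_mem_iterate_image {X : Type*} {f : X → X}
    (hf : Injective f) {s : Set X} {k n : ℕ} {p : X} (hp : p ∈ f^[k] '' s)
    (hper : IsPeriodicPt f n p) (m : ℕ) : ∃ q ∈ f^[m] '' s, IsPeriodicPt f n q := by
  obtain ⟨b, hb, rfl⟩ := hp
  have hb_per : IsPeriodicPt f n b :=
    (hf.iterate k) ((((Commute.refl f).iterate_iterate k n).eq b).trans hper)
  exact ⟨f^[m] b, mem_image_of_mem _ hb, hb_per.apply_iterate m⟩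

namespace Nat

lemma add_lt_of_lt_of_modEq_succ {L s n : ℕ} (hs : s < n) (hsn : s ≡ n [MOD L + 1]) :
    s + L < n := by
  have hdvd : L + 1 ∣ n - s := (modEq_iff_dvd' hs.le).mp hsn
  have := le_of_dvd (Nat.sub_pos_of_lt hs) hdvd
  omega

lemma eq_of_add_eq_add_of_modEq_succ {L s s' i j : ℕ} (hss' : s ≡ s' [MOD L + 1])
    (hsum : i + s = j + s') (hi : i ≤ L) (hj : j ≤ L) : i = j := by
  have hij : i ≡ j [MOD L + 1] := hss'.add_right_cancel (hsum ▸ ModEq.rfl)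
  rw [← mod_eq_of_modEq hij (by omega), mod_eq_of_lt (by omega)]

lemma exists_modEq_succ_near {L n m : ℕ} (hL : L < n) (hm : m < n) :
    ∃ s < n, s ≡ n [MOD L + 1] ∧ s ≤ m + L ∧ m ≤ s + L := by
  rcases lt_or_ge (m + L) n with hmL | hmL
  · have hmod : (n - m) % (L + 1) < L + 1 := mod_lt _ (succ_pos L)
    refine ⟨m + (n - m) % (L + 1), by omega, ?_, by omega, by omega⟩
    calc m + (n - m) % (L + 1) ≡ m + (n - m) [MOD L + 1] := (mod_modEq _ _).add_left m
      _ = n := Nat.add_sub_cancel' hm.le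
  · refine ⟨n - (L + 1), by omega, ?_, by omega, by omega⟩
    calc n - (L + 1) ≡ n - (L + 1) + (L + 1) [MOD L + 1] :=
          left_modEq_add_iff.mpr dvd_rfl
      _ = n := Nat.sub_add_cancel hL

end Nat

section Markers

variable {X E : Type*}

def markerSet (f : X → X) (B : E → Set X) (l : E → ℕ) (L : ℕ) : Set X :=
  ⋃ e, ⋃ s ∈ (Finset.range (l e)).filter (· ≡ l e [MOD L + 1]), f^[s] '' B e

lemma iterate_image_subset_markerSet {f : X → X} {B : E → Set X} {l : E → ℕ} {L : ℕ}
    {e : E} {s : ℕ} (hs : s < l e) (hse : s ≡ l e [MOD L + 1]) :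
    f^[s] '' B e ⊆ markerSet f B l L :=
  subset_iUnion_of_subset e <| subset_biUnion_of_mem (u := fun s => f^[s] '' B e)
    (Finset.mem_filter.mpr ⟨Finset.mem_range.mpr hs, hse⟩)

lemma isClopen_markerSet [TopologicalSpace X] [Finite E] (f : X ≃ₜ X) {B : E → Set X}
    (hB : ∀ e, IsClopen (B e)) (l : E → ℕ) (L : ℕ) : IsClopen (markerSet f B l L) :=
  isClopen_iUnion_of_finite fun e =>
    isClopen_biUnion_finset fun s _ => (hB e).image_iterate_homeomorph f s

lemma disjoint_iterate_image_markerSet {f : X → X} {B : E → Set X} {l : E → ℕ} {L : ℕ}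
    (hdisj : ∀ e i e' i', i < l e → i' < l e' → (e, i) ≠ (e', i') →
      Disjoint (f^[i] '' B e) (f^[i'] '' B e'))
    {i j : ℕ} (hi : i ≤ L) (hj : j ≤ L) (hij : i ≠ j) :
    Disjoint (f^[i] '' markerSet f B l L) (f^[j] '' markerSet f B l L) := by
  rw [disjoint_left]
  rintro _ ⟨_, hy, rfl⟩ ⟨_, hy', hyy'⟩
  simp only [markerSet, mem_iUnion, Finset.mem_filter, Finset.mem_range] at hy hy'
  obtain ⟨e, s, ⟨hs, hse⟩, b, hb, rfl⟩ := hy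
  obtain ⟨e', s', ⟨hs', hse'⟩, b', hb', rfl⟩ := hy'
  rw [← iterate_add_apply] at hyy'
  have hfloor : (e, i + s) = (e', j + s') := by
    by_contra hne
    have hlt := Nat.add_lt_of_lt_of_modEq_succ hs hse
    have hlt' := Nat.add_lt_of_lt_of_modEq_succ hs' hse'
    exact disjoint_left.mp (hdisj e (i + s) e' (j + s') (by omega) (by omega) hne)
      ⟨b, hb, iterate_add_apply f i s b⟩ ⟨b', hb', hyy'⟩
  obtain ⟨rfl, hsum⟩ := Prod.mk.inj hfloor
  exact hij (Nat.eq_of_add_eq_add_of_modEq_succ (hse.trans hse'.symm) hsum hi hj)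

lemma iterate_mem_zpow_image_markerSet (σ : Equiv.Perm X) (B : E → Set X) (l : E → ℕ)
    {L : ℕ} {e : E} (hL : L < l e) {m : ℕ} (hm : m < l e) {b : X} (hb : b ∈ B e) :
    σ^[m] b ∈ ⋃ i ∈ Finset.Icc (-(L : ℤ)) L, (σ ^ i) '' markerSet σ B l L := by
  obtain ⟨s, hs, hse, hsm, hms⟩ := Nat.exists_modEq_succ_near hL hm
  refine mem_biUnion (x := (m : ℤ) - s) (Finset.mem_Icc.mpr ⟨by omega, by omega⟩) ?_
  exact ⟨σ^[s] b, iterate_image_subset_markerSet hs hse (mem_image_of_mem _ hb),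
    σ.zpow_sub_apply_iterate m s b⟩

end Markers

theorem stmt7_general {X : Type*} [MetricSpace X] [CompactSpace X]
    (f : X ≃ₜ X) (L : ℕ) (ε : ℝ)
    (E : Type) [Fintype E] (B : E → Set X) (l : E → ℕ)
    (hclopen : ∀ e, IsClopen (B e)) (hpos : ∀ e, 0 < l e)
    (hdisj : ∀ e i e' i', i < l e → i' < l e' → (e, i) ≠ (e', i') →
      Disjoint ((f : X → X)^[i] '' B e) ((f : X → X)^[i'] '' B e'))
    (hcover : (⋃ e, ⋃ i ∈ Finset.range (l e), (f : X → X)^[i] '' B e) = Set.univ)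
    (hdiam : ∀ e i, i < l e → Metric.diam ((f : X → X)^[i] '' B e) ≤ ε)
    (hper : ∀ e, l e ≤ L →
      ∃ p ∈ ⋃ i ∈ Finset.range (l e), (f : X → X)^[i] '' B e,
        (f : X → X)^[l e] p = p ∧ ∀ j, 0 < j → j < l e → (f : X → X)^[j] p ≠ p) :
    ∃ F : Set X, IsClopen F ∧
      (∀ i j, i ≤ L → j ≤ L → i ≠ j →
        Disjoint ((f : X → X)^[i] '' F) ((f : X → X)^[j] '' F)) ∧
      ∀ x : X, x ∉ (⋃ i ∈ Finset.Icc (-(L : ℤ)) (L : ℤ), (f.toEquiv ^ i) '' F) →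
        ∃ p : X, (∃ k, 1 ≤ k ∧ k ≤ L ∧ (f : X → X)^[k] p = p) ∧ dist x p ≤ ε := by
  refine ⟨markerSet f B l L, isClopen_markerSet f hclopen l L,
    fun i j hi hj hij => disjoint_iterate_image_markerSet hdisj hi hj hij, ?_⟩
  intro x hx
  obtain ⟨e, m, hm, b, hb, rfl⟩ :
      ∃ e, ∃ m < l e, ∃ b ∈ B e, (f : X → X)^[m] b = x := by
    simpa using hcover.ge (mem_univ x)
  rcases le_or_gt (l e) L with hshort | htall
  · obtain ⟨p, hp, hp_per, -⟩ := hper e hshort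
    obtain ⟨k, -, hpk⟩ : ∃ k, k < l e ∧ p ∈ (f : X → X)^[k] '' B e := by simpa using hp
    obtain ⟨q, hq, hq_per⟩ := f.injective.exists_isPeriodicPt_mem_iterate_image hpk hp_per m
    exact ⟨q, ⟨l e, hpos e, hshort, hq_per⟩, (Metric.dist_le_diam_of_mem
      Metric.isBounded_of_compactSpace (mem_image_of_mem _ hb) hq).trans (hdiam e m hm)⟩
  · exact absurd (iterate_mem_zpow_image_markerSet f.toEquiv B l htall hm hb) hx

/-- An analogue of Krieger's marker lemma: from an `(L+n)`-periodicity-regulated tower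
decomposition with floors of diameter at most `ε`, one obtains a clopen marker set `F`
with `f^i(F)`, `0 ≤ i ≤ L`, pairwise disjoint, such that every point outside
`⋃_{-L ≤ i ≤ L} f^i(F)` is within `ε` of a periodic point of period at most `L`. -/
theorem stmt7 {X : Type*} [MetricSpace X] [CompactSpace X] [TotallyDisconnectedSpace X]
    (f : X ≃ₜ X) (L : ℕ) (hL : 1 ≤ L) (ε : ℝ) (hε : 0 < ε)
    (E : Type) [Fintype E] (B : E → Set X) (l : E → ℕ)
    (hclopen : ∀ e, IsClopen (B e)) (hpos : ∀ e, 0 < l e)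
    (hdisj : ∀ e i e' i', i < l e → i' < l e' → (e, i) ≠ (e', i') →
      Disjoint ((f : X → X)^[i] '' B e) ((f : X → X)^[i'] '' B e'))
    (hcover : (⋃ e, ⋃ i ∈ Finset.range (l e), (f : X → X)^[i] '' B e) = Set.univ)
    (hdiam : ∀ e i, i < l e → Metric.diam ((f : X → X)^[i] '' B e) ≤ ε)
    (hper : ∀ e, l e ≤ L →
      ∃ p ∈ ⋃ i ∈ Finset.range (l e), (f : X → X)^[i] '' B e,
        (f : X → X)^[l e] p = p ∧ ∀ j, 0 < j → j < l e → (f : X → X)^[j] p ≠ p) :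
    ∃ F : Set X, IsClopen F ∧
      (∀ i j, i ≤ L → j ≤ L → i ≠ j →
        Disjoint ((f : X → X)^[i] '' F) ((f : X → X)^[j] '' F)) ∧
      ∀ x : X, x ∉ (⋃ i ∈ Finset.Icc (-(L : ℤ)) (L : ℤ), (f.toEquiv ^ i) '' F) →
        ∃ p : X, (∃ k, 1 ≤ k ∧ k ≤ L ∧ (f : X → X)^[k] p = p) ∧ dist x p ≤ ε :=
  stmt7_general f L ε E B l hclopen hpos hdisj hcover hdiam hper
end

section
/- Let (𝒱,ℰ,s,r,≥) be a finite ordered surjective mono-graph. Then there exists a positive integer K such that in the stationary ordered Bratteli diagram generated by (𝒱,ℰ^K,s,r,≥), every maximal infinite path and every minimal infinite path is straight, i.e., passes through copies of a single fixed edge of ℰ^K at every level ≥ 2. -/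
/-!
In a maximal path each edge is the greatest edge ending where the next one starts, so it is a
function `f` of its successor, and likewise (with a function `g`) for minimal paths. On the finite
set `ℰ` some iterate `(f, g)^[K]` is idempotent, and then `p i = f^[K] (p (i + K))` forces
`p (i + K) = p i`.
-/

namespace Function

variable {α : Type*}

lemma exists_iterate_idempotent [Finite α] (f : α → α) :
    ∃ K, 0 < K ∧ ∀ x, f^[K] (f^[K] x) = f^[K] x := by
  obtain ⟨m, n, hmn, hf⟩ : ∃ m n, m < n ∧ f^[m] = f^[n] :=
    Set.finite_univ.exists_lt_map_eq_of_forall_mem (f := fun n => f^[n]) fun _ => Set.mem_univ _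
  obtain ⟨d, rfl⟩ := Nat.exists_eq_add_of_lt hmn
  have hper : ∀ c a, f^[a + m + c * (d + 1)] = f^[a + m] := by
    intro c a
    induction c with
    | zero => simp
    | succ c ih =>
      calc f^[a + m + (c + 1) * (d + 1)] = f^[(a + c * (d + 1)) + (m + d + 1)] := by ring_nf
        _ = f^[(a + c * (d + 1)) + m] := by rw [iterate_add, ← hf, ← iterate_add]
        _ = f^[a + m] := by rw [← ih]; ring_nf
  refine ⟨(m + 1) * (d + 1), by positivity, fun x => ?_⟩
  rw [← iterate_add_apply]
  convert congrFun (hper (m + 1) (m * d + d + 1)) x using 2 <;> ring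

lemma periodic_of_eq_apply_succ {f : α → α} {K : ℕ} (hK : ∀ x, f^[K] (f^[K] x) = f^[K] x)
    {p : ℕ → α} (hp : ∀ i, p i = f (p (i + 1))) : Periodic p K := by
  have hiter : ∀ n i, p i = f^[n] (p (i + n)) := by
    intro n
    induction n with
    | zero => simp
    | succ n ih =>
      intro i
      rw [ih, hp (i + n), ← iterate_succ_apply, add_assoc]
  intro i
  rw [hiter K (i + K), hiter K i, hiter K (i + K), hK]

end Function

namespace Relator

variable {α : Type*}

open Classical in
/-- The `R`-predecessor of `y`; the value `y` itself is a junk value when there is none. -/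
noncomputable def choosePred (R : α → α → Prop) (y : α) : α :=
  if h : ∃ x, R x y then h.choose else y

lemma LeftUnique.choosePred_eq {R : α → α → Prop} (hR : LeftUnique R) {x y : α} (h : R x y) :
    choosePred R y = x := by
  have hex : ∃ x, R x y := ⟨x, h⟩
  rw [choosePred, dif_pos hex]
  exact hR hex.choose_spec h

end Relator

open Function Relator in
theorem stmt10_general (𝒱 ℰ : Type) [Fintype ℰ] [PartialOrder ℰ]
    (s r : ℰ → 𝒱) :
    ∃ K : ℕ, 0 < K ∧
      (∀ p : ℕ → ℰ, (∀ i, r (p i) = s (p (i + 1))) →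
        (∀ i, ∀ e' : ℰ, r e' = r (p i) → e' ≤ p i) → ∀ i, p (i + K) = p i) ∧
      (∀ p : ℕ → ℰ, (∀ i, r (p i) = s (p (i + 1))) →
        (∀ i, ∀ e' : ℰ, r e' = r (p i) → p i ≤ e') → ∀ i, p (i + K) = p i) := by
  let IsTopPred : ℰ → ℰ → Prop := fun e e' => IsGreatest {x | r x = s e'} e
  let IsBotPred : ℰ → ℰ → Prop := fun e e' => IsLeast {x | r x = s e'} e
  obtain ⟨K, hK, hidem⟩ :=
    exists_iterate_idempotent (Prod.map (choosePred IsTopPred) (choosePred IsBotPred))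
  simp only [Prod.map_iterate, Prod.map_apply, Prod.mk.injEq, Prod.forall] at hidem
  have hTop : LeftUnique IsTopPred := fun _ _ _ => IsGreatest.unique
  have hBot : LeftUnique IsBotPred := fun _ _ _ => IsLeast.unique
  refine ⟨K, hK, fun p hchain hmax => ?_, fun p hchain hmin => ?_⟩
  · refine periodic_of_eq_apply_succ (fun x => (hidem x x).1) fun i => ?_
    exact (hTop.choosePred_eq ⟨hchain i, fun e he => hmax i e (he.trans (hchain i).symm)⟩).symm
  · refine periodic_of_eq_apply_succ (fun x => (hidem x x).2) fun i => ?_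
    exact (hBot.choosePred_eq ⟨hchain i, fun e he => hmin i e (he.trans (hchain i).symm)⟩).symm

/-- Telescoping a stationary ordered Bratteli diagram so that all maximal and minimal
infinite paths become straight: there is `K > 0` such that every maximal (resp.
minimal) infinite path `p : ℕ → ℰ` (each edge maximal, resp. minimal, in its range
fiber, and chained by `r (p i) = s (p (i+1))`) is `K`-periodic, i.e. after grouping
edges into blocks of length `K` (telescoping), the path passes through copies of one
fixed element of `ℰ^K` at every level. -/
theorem stmt10 (𝒱 ℰ : Type) [Fintype 𝒱] [Fintype ℰ] [PartialOrder ℰ]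
    (s r : ℰ → 𝒱) (hr : Function.Surjective r) (hs : Function.Surjective s)
    (hcomp : ∀ e e' : ℰ, r e = r e' ↔ (e ≤ e' ∨ e' ≤ e)) :
    ∃ K : ℕ, 0 < K ∧
      (∀ p : ℕ → ℰ, (∀ i, r (p i) = s (p (i + 1))) →
        (∀ i, ∀ e' : ℰ, r e' = r (p i) → e' ≤ p i) → ∀ i, p (i + K) = p i) ∧
      (∀ p : ℕ → ℰ, (∀ i, r (p i) = s (p (i + 1))) →
        (∀ i, ∀ e' : ℰ, r e' = r (p i) → p i ≤ e') → ∀ i, p (i + K) = p i) :=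
  stmt10_general 𝒱 ℰ s r
end

section
/- Let (𝒱,ℰ,s,r,≥) be a straight ordered surjective mono-graph generating a stationary ordered Bratteli diagram (V,E,≥). The diagram admits a continuous Vershik map ψ : E_{0,∞} → E_{0,∞} if and only if it satisfies the continuity condition: there exists a surjective map ψ̄ : 𝒱_{max,1} → 𝒱_{min,1} such that for every non-maximal edge e ∈ ℰ, ψ̄(max(s(e))) = min(s(e(serial))), where e(serial) is the successor of e in the order on r^{-1}(r(e)). -/
/-- An edge is maximal in its range fiber. -/
def FibMax {𝒱 ℰ : Type} [PartialOrder ℰ] (rE : ℰ → 𝒱) (e : ℰ) : Prop :=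
  ∀ e', rE e' = rE e → e' ≤ e

/-- An edge is minimal in its range fiber. -/
def FibMin {𝒱 ℰ : Type} [PartialOrder ℰ] (rE : ℰ → 𝒱) (e : ℰ) : Prop :=
  ∀ e', rE e' = rE e → e ≤ e'

/-- `e'` is the (serial) successor of `e` in its range fiber. -/
def Serial {𝒱 ℰ : Type} [PartialOrder ℰ] (rE : ℰ → 𝒱) (e e' : ℰ) : Prop :=
  rE e' = rE e ∧ e < e' ∧ ∀ e'', rE e'' = rE e → e < e'' → e' ≤ e''

/-- The space `E_{0,∞}` of infinite paths of the stationary ordered Bratteli diagram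
generated by a mono-graph `(𝒱,ℰ,s,r)` with `n v` edges from the root `v₀` to `(v,1)`:
a path is a level-one edge (a pair `(v,i)` with `i < n v`) together with a chained
sequence of edges of `ℰ` (levels `≥ 2`). -/
abbrev PathSp {𝒱 : Type} (ℰ : Type) (sE rE : ℰ → 𝒱) (nv : 𝒱 → ℕ) : Type :=
  {p : ((v : 𝒱) × Fin (nv v)) × (ℕ → ℰ) //
    sE (p.2 0) = p.1.1 ∧ ∀ i, sE (p.2 (i + 1)) = rE (p.2 i)}

/-- A maximal infinite path: every edge is maximal in its fiber. -/
def IsMaxPath {𝒱 ℰ : Type} [PartialOrder ℰ] (sE rE : ℰ → 𝒱) (nv : 𝒱 → ℕ)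
    (p : PathSp ℰ sE rE nv) : Prop :=
  ((p.1.1.2 : ℕ) + 1 = nv p.1.1.1) ∧ ∀ i, FibMax rE (p.1.2 i)

/-- A minimal infinite path: every edge is minimal in its fiber. -/
def IsMinPath {𝒱 ℰ : Type} [PartialOrder ℰ] (sE rE : ℰ → 𝒱) (nv : 𝒱 → ℕ)
    (p : PathSp ℰ sE rE nv) : Prop :=
  ((p.1.1.2 : ℕ) = 0) ∧ ∀ i, FibMin rE (p.1.2 i)

/-- `q` is the lexicographic successor of the (non-maximal) path `p`. -/
def Succ {𝒱 ℰ : Type} [PartialOrder ℰ] (sE rE : ℰ → 𝒱) (nv : 𝒱 → ℕ)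
    (p q : PathSp ℰ sE rE nv) : Prop :=
  ((p.1.1.2 : ℕ) + 1 < nv p.1.1.1 ∧ q.1.2 = p.1.2 ∧ q.1.1.1 = p.1.1.1 ∧
    (q.1.1.2 : ℕ) = (p.1.1.2 : ℕ) + 1) ∨
  ((p.1.1.2 : ℕ) + 1 = nv p.1.1.1 ∧ ∃ k : ℕ,
    (∀ i, i < k → FibMax rE (p.1.2 i)) ∧ ¬ FibMax rE (p.1.2 k) ∧
    Serial rE (p.1.2 k) (q.1.2 k) ∧ (∀ i, k < i → q.1.2 i = p.1.2 i) ∧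
    (∀ i, i < k → FibMin rE (q.1.2 i)) ∧ (q.1.1.2 : ℕ) = 0)

/-- Vertices carrying a maximal loop edge (`𝒱_{max,1}`). -/
def Vmax1 {𝒱 ℰ : Type} [PartialOrder ℰ] (sE rE : ℰ → 𝒱) : Set 𝒱 :=
  {w | ∃ e, sE e = w ∧ rE e = w ∧ FibMax rE e}

/-- Vertices carrying a minimal loop edge (`𝒱_{min,1}`). -/
def Vmin1 {𝒱 ℰ : Type} [PartialOrder ℰ] (sE rE : ℰ → 𝒱) : Set 𝒱 :=
  {w | ∃ e, sE e = w ∧ rE e = w ∧ FibMin rE e}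

/-!
By straightness, maximal and minimal paths are constant loops, determined by their root vertex in
`𝒱_{max,1}` resp. `𝒱_{min,1}`; so a Vershik map `ψ` induces `ψ̄ : 𝒱_{max,1} → 𝒱_{min,1}` onto.
Sources are constant along chains of maximal (minimal) edges. Hence if a path stays maximal for `k`
levels from `max(s(e))` and then passes through a non-maximal `e` with serial successor `e'`, its
successor descends minimally from `e'` and has root vertex `min(s(e'))`. Letting `k → ∞` these paths
converge to the maximal loop path at `max(s(e))`, and continuity of `ψ` gives
`ψ̄(max(s(e))) = min(s(e'))`.

Conversely, define `ψ` as the successor map and as the minimal loop over `ψ̄` on maximal paths.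
Near a maximal path every path carries only far out, and by the condition its successor has already
reached the minimal loop over `ψ̄` at all low levels; so each coordinate of `ψ` is locally constant.
-/

open Filter Topology

section FiberOrder

variable {𝒱 ℰ : Type} [PartialOrder ℰ] {sE rE : ℰ → 𝒱} {e e' e'' : ℰ}

theorem FibMax.eq (h : FibMax rE e) (h' : FibMax rE e') (hr : rE e = rE e') : e = e' :=
  le_antisymm (h' e hr) (h e' hr.symm)

theorem FibMin.eq (h : FibMin rE e) (h' : FibMin rE e') (hr : rE e = rE e') : e = e' :=
  FibMax.eq (ℰ := ℰᵒᵈ) h h' hr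

theorem Serial.unique (h : Serial rE e e') (h' : Serial rE e e'') : e' = e'' :=
  le_antisymm (h.2.2 e'' h'.1 h'.2.1) (h'.2.2 e' h.1 h.2.1)

theorem Serial.not_fibMax (h : Serial rE e e') : ¬ FibMax rE e :=
  fun hmax => (h.2.1.trans_le (hmax e' h.1)).false

theorem exists_serial_of_not_fibMax [Finite ℰ]
    (hcomp : ∀ e e' : ℰ, rE e = rE e' ↔ (e ≤ e' ∨ e' ≤ e)) (he : ¬ FibMax rE e) :
    ∃ e', Serial rE e e' := by
  obtain ⟨f, hf, hfe⟩ : ∃ f, rE f = rE e ∧ ¬ f ≤ e := by simpa [FibMax] using he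
  have hef : e < f := (((hcomp f e).1 hf).resolve_left hfe).lt_of_not_ge hfe
  obtain ⟨m, ⟨hmr, hem⟩, hmin⟩ :=
    (Set.toFinite {g | rE g = rE e ∧ e < g}).exists_minimal ⟨f, hf, hef⟩
  refine ⟨m, hmr, hem, fun g hg heg => ?_⟩
  exact ((hcomp m g).1 (hmr.trans hg.symm)).elim id fun hgm => hmin ⟨hg, heg⟩ hgm

theorem FibMax.src_eq_rE (he : FibMax rE e) (hv : rE e ∈ Vmax1 sE rE) : sE e = rE e := by
  obtain ⟨ℓ, hℓs, hℓr, hℓ⟩ := hv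
  rw [he.eq hℓ hℓr.symm, hℓs, hℓr]

theorem FibMin.src_eq_rE (he : FibMin rE e) (hv : rE e ∈ Vmin1 sE rE) : sE e = rE e :=
  FibMax.src_eq_rE (ℰ := ℰᵒᵈ) he hv

end FiberOrder

section Sources

variable {𝒱 ℰ : Type} [PartialOrder ℰ] {sE rE : ℰ → 𝒱} {e : ℰ}

/-- `maxV` is the paper's `max(v) := s(e(v,max))`; `IsMinSource` likewise for `min`. -/
def IsMaxSource (sE rE : ℰ → 𝒱) (maxV : 𝒱 → 𝒱) : Prop :=
  ∀ v, ∃ e, rE e = v ∧ FibMax rE e ∧ maxV v = sE e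

def IsMinSource (sE rE : ℰ → 𝒱) (minV : 𝒱 → 𝒱) : Prop :=
  ∀ v, ∃ e, rE e = v ∧ FibMin rE e ∧ minV v = sE e

variable {maxV minV : 𝒱 → 𝒱}

theorem FibMax.maxV_rE (hmaxV : IsMaxSource sE rE maxV) (he : FibMax rE e) :
    maxV (rE e) = sE e := by
  obtain ⟨a, har, ha, hav⟩ := hmaxV (rE e)
  rw [hav, ha.eq he har]

theorem FibMin.minV_rE (hminV : IsMinSource sE rE minV) (he : FibMin rE e) :
    minV (rE e) = sE e :=
  FibMax.maxV_rE (ℰ := ℰᵒᵈ) hminV he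

theorem FibMax.src_mem_Vmax1 (hmaxV : IsMaxSource sE rE maxV)
    (hmax1 : ∀ v, maxV v ∈ Vmax1 sE rE) (he : FibMax rE e) : sE e ∈ Vmax1 sE rE :=
  he.maxV_rE hmaxV ▸ hmax1 _

theorem FibMin.src_mem_Vmin1 (hminV : IsMinSource sE rE minV)
    (hmin1 : ∀ v, minV v ∈ Vmin1 sE rE) (he : FibMin rE e) : sE e ∈ Vmin1 sE rE :=
  FibMax.src_mem_Vmax1 (ℰ := ℰᵒᵈ) hminV hmin1 he

/-- Along a chain of maximal edges every edge but the last is the maximal loop at its range,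
so the source never moves. -/
theorem src_eq_of_fibMax_chain (hmaxV : IsMaxSource sE rE maxV)
    (hmax1 : ∀ v, maxV v ∈ Vmax1 sE rE) {f : ℕ → ℰ} (hf : ∀ i, sE (f (i + 1)) = rE (f i))
    {n : ℕ} (h : ∀ i ≤ n, FibMax rE (f i)) : sE (f 0) = sE (f n) := by
  induction n with
  | zero => rfl
  | succ n ih =>
    have hrange : rE (f n) ∈ Vmax1 sE rE :=
      hf n ▸ (h (n + 1) le_rfl).src_mem_Vmax1 hmaxV hmax1
    rw [ih fun i hi => h i (by omega), (h n (by omega)).src_eq_rE hrange, hf]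

theorem src_eq_of_fibMin_chain (hminV : IsMinSource sE rE minV)
    (hmin1 : ∀ v, minV v ∈ Vmin1 sE rE) {f : ℕ → ℰ} (hf : ∀ i, sE (f (i + 1)) = rE (f i))
    {n : ℕ} (h : ∀ i ≤ n, FibMin rE (f i)) : sE (f 0) = sE (f n) :=
  src_eq_of_fibMax_chain (ℰ := ℰᵒᵈ) hminV hmin1 hf h

end Sources

section DiscreteSequences

variable {X A B : Type} [TopologicalSpace X] [TopologicalSpace A] [TopologicalSpace B]

theorem eventually_cylinder [DiscreteTopology A] [DiscreteTopology B] (x : A × (ℕ → B)) (M : ℕ) :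
    ∀ᶠ y in 𝓝 x, y.1 = x.1 ∧ ∀ i ≤ M, y.2 i = x.2 i := by
  have hcyl : {x.1} ×ˢ (Set.Iic M).pi (fun i => {x.2 i}) ∈ 𝓝 x :=
    prod_mem_nhds (mem_nhds_discrete.2 rfl)
      (set_pi_mem_nhds (Set.finite_Iic M) fun i _ => mem_nhds_discrete.2 rfl)
  filter_upwards [hcyl] with y ⟨hy1, hy2⟩
  exact ⟨hy1, fun i hi => hy2 i hi⟩

theorem continuous_of_eventually_eq {F : X → A × (ℕ → B)}
    (h : ∀ x j, ∀ᶠ y in 𝓝 x, (F y).1 = (F x).1 ∧ (F y).2 j = (F x).2 j) : Continuous F := by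
  refine Continuous.prodMk ?_ (continuous_pi fun j => ?_) <;>
    refine IsLocallyConstant.continuous ((IsLocallyConstant.iff_eventually_eq _).2 fun x => ?_)
  exacts [(h x 0).mono fun _ hy => hy.1, (h x j).mono fun _ hy => hy.2]

end DiscreteSequences

section Paths

variable {𝒱 ℰ : Type} {sE rE : ℰ → 𝒱} {nv : 𝒱 → ℕ}

theorem sigmaFin_ext {a b : (v : 𝒱) × Fin (nv v)} (h1 : a.1 = b.1) (h2 : (a.2 : ℕ) = b.2) :
    a = b :=
  Sigma.ext h1 ((Fin.heq_ext_iff (congrArg nv h1)).2 h2)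

theorem pathSp_ext {p q : PathSp ℰ sE rE nv} (hv : p.1.1.1 = q.1.1.1)
    (hi : (p.1.1.2 : ℕ) = q.1.1.2) (he : ∀ i, p.1.2 i = q.1.2 i) : p = q :=
  Subtype.ext (Prod.ext (sigmaFin_ext hv hi) (funext he))

theorem PathSp.loop_of_const (p : PathSp ℰ sE rE nv) {ℓ : ℰ} (hp : ∀ i, p.1.2 i = ℓ) :
    sE ℓ = rE ℓ ∧ sE ℓ = p.1.1.1 := by
  have h0 := p.2.2 0
  rw [hp, hp] at h0
  exact ⟨h0, hp 0 ▸ p.2.1⟩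

theorem PathSp.top_of_not_lt {p : PathSp ℰ sE rE nv} (h : ¬ (p.1.1.2 : ℕ) + 1 < nv p.1.1.1) :
    (p.1.1.2 : ℕ) + 1 = nv p.1.1.1 := by
  have := p.1.1.2.isLt
  omega

theorem exists_chain_of_surjective (hs : Function.Surjective sE) (e : ℰ) :
    ∃ f : ℕ → ℰ, f 0 = e ∧ ∀ i, sE (f (i + 1)) = rE (f i) := by
  choose g hg using hs
  refine ⟨fun n => (g ∘ rE)^[n] e, rfl, fun i => ?_⟩
  show sE ((g ∘ rE)^[i + 1] e) = rE ((g ∘ rE)^[i] e)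
  rw [Function.iterate_succ_apply']
  exact hg _

theorem chain_loop_prefix {ℓ : ℰ} (hℓ : sE ℓ = rE ℓ) {t : ℕ → ℰ} (ht0 : sE (t 0) = rE ℓ)
    (ht : ∀ i, sE (t (i + 1)) = rE (t i)) (n : ℕ) :
    ∀ i, sE (if i + 1 < n then ℓ else t (i + 1 - n)) = rE (if i < n then ℓ else t (i - n)) := by
  intro i
  rcases lt_trichotomy (i + 1) n with h | h | h
  · rw [if_pos h, if_pos (by omega), hℓ]
  · rw [if_neg (by omega), if_pos (by omega), h, Nat.sub_self, ht0]
  · rw [if_neg (by omega), if_neg (by omega), show i + 1 - n = i - n + 1 by omega, ht]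

variable [PartialOrder ℰ]

theorem IsMinPath.head_mem_Vmin1
    (hstrMin : ∀ p : PathSp ℰ sE rE nv, IsMinPath sE rE nv p → ∃ e, ∀ i, p.1.2 i = e)
    {p : PathSp ℰ sE rE nv} (hp : IsMinPath sE rE nv p) : p.1.1.1 ∈ Vmin1 sE rE := by
  obtain ⟨m, hpm⟩ := hstrMin p hp
  obtain ⟨hm, hmv⟩ := p.loop_of_const hpm
  exact ⟨m, hmv, hm ▸ hmv, hpm 0 ▸ hp.2 0⟩

variable (nv)

noncomputable def maxLoopPath (hnv : ∀ v, 0 < nv v) {v : 𝒱} (hv : v ∈ Vmax1 sE rE) :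
    PathSp ℰ sE rE nv :=
  ⟨⟨⟨v, ⟨nv v - 1, Nat.sub_lt (hnv v) one_pos⟩⟩, fun _ => hv.choose⟩,
    hv.choose_spec.1, fun _ => hv.choose_spec.1.trans hv.choose_spec.2.1.symm⟩

noncomputable def maxLoopPrefixPath (hnv : ∀ v, 0 < nv v) {v : 𝒱} (hv : v ∈ Vmax1 sE rE)
    {t : ℕ → ℰ} (ht0 : sE (t 0) = v) (ht : ∀ i, sE (t (i + 1)) = rE (t i)) (n : ℕ) :
    PathSp ℰ sE rE nv :=
  ⟨⟨⟨v, ⟨nv v - 1, Nat.sub_lt (hnv v) one_pos⟩⟩, fun i => if i < n then hv.choose else t (i - n)⟩,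
    by dsimp only; split_ifs <;> simp [hv.choose_spec.1, ht0],
    chain_loop_prefix (hv.choose_spec.1.trans hv.choose_spec.2.1.symm)
      (ht0.trans hv.choose_spec.2.1.symm) ht n⟩

theorem isMaxPath_maxLoopPath (hnv : ∀ v, 0 < nv v) {v : 𝒱} (hv : v ∈ Vmax1 sE rE) :
    IsMaxPath sE rE nv (maxLoopPath nv hnv hv) :=
  ⟨Nat.sub_add_cancel (hnv v), fun _ => hv.choose_spec.2.2⟩

theorem tendsto_maxLoopPrefixPath (hnv : ∀ v, 0 < nv v) {v : 𝒱} (hv : v ∈ Vmax1 sE rE)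
    {t : ℕ → ℰ} (ht0 : sE (t 0) = v) (ht : ∀ i, sE (t (i + 1)) = rE (t i))
    [TopologicalSpace ℰ] [TopologicalSpace ((v : 𝒱) × Fin (nv v))] :
    Tendsto (maxLoopPrefixPath nv hnv hv ht0 ht) atTop (𝓝 (maxLoopPath nv hnv hv)) := by
  refine tendsto_subtype_rng.2 (tendsto_const_nhds.prodMk_nhds (tendsto_pi_nhds.2 fun j => ?_))
  exact tendsto_const_nhds.congr' (eventually_atTop.2 ⟨j + 1, fun n hn => (if_pos hn).symm⟩)

theorem IsMaxPath.exists_eq_maxLoopPath (hnv : ∀ v, 0 < nv v)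
    (hstrMax : ∀ p : PathSp ℰ sE rE nv, IsMaxPath sE rE nv p → ∃ e, ∀ i, p.1.2 i = e)
    {p : PathSp ℰ sE rE nv} (hp : IsMaxPath sE rE nv p) :
    ∃ hv : p.1.1.1 ∈ Vmax1 sE rE, maxLoopPath nv hnv hv = p := by
  obtain ⟨ℓ, hpℓ⟩ := hstrMax p hp
  obtain ⟨hℓ, hℓv⟩ := p.loop_of_const hpℓ
  have hv : p.1.1.1 ∈ Vmax1 sE rE := ⟨ℓ, hℓv, hℓ ▸ hℓv, hpℓ 0 ▸ hp.2 0⟩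
  refine ⟨hv, pathSp_ext rfl (by simp only [maxLoopPath]; have := hp.1; omega) fun i => ?_⟩
  rw [hpℓ]
  exact hv.choose_spec.2.2.eq (hpℓ 0 ▸ hp.2 0) (by rw [hv.choose_spec.2.1, ← hℓv, hℓ])

end Paths

section Forward

variable {𝒱 ℰ : Type} [PartialOrder ℰ] {sE rE : ℰ → 𝒱} {nv : 𝒱 → ℕ} {maxV minV : 𝒱 → 𝒱}

def IsVershikMap [TopologicalSpace ℰ] [TopologicalSpace ((v : 𝒱) × Fin (nv v))]
    (ψ : PathSp ℰ sE rE nv → PathSp ℰ sE rE nv) : Prop :=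
  Continuous ψ ∧ ψ '' {p | IsMaxPath sE rE nv p} = {p | IsMinPath sE rE nv p} ∧
    ∀ p, ¬ IsMaxPath sE rE nv p → Succ sE rE nv p (ψ p)

/-- `ψb` is the paper's `ψ̄ : 𝒱_{max,1} → 𝒱_{min,1}`, extended arbitrarily to all of `𝒱`. -/
def ContinuityCondition (sE rE : ℰ → 𝒱) (maxV minV ψb : 𝒱 → 𝒱) : Prop :=
  (∀ v ∈ Vmax1 sE rE, ψb v ∈ Vmin1 sE rE) ∧ (∀ w ∈ Vmin1 sE rE, ∃ v ∈ Vmax1 sE rE, ψb v = w) ∧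
    ∀ e e' : ℰ, Serial rE e e' → ψb (maxV (sE e)) = minV (sE e')

/-- Below the carry the successor consists of minimal edges, along which the source is constant,
so its root vertex is `min(s(e'))`. -/
theorem Succ.head_eq_minV (hminV : IsMinSource sE rE minV)
    (hmin1 : ∀ v, minV v ∈ Vmin1 sE rE) {p q : PathSp ℰ sE rE nv} (hpq : Succ sE rE nv p q)
    (htop : (p.1.1.2 : ℕ) + 1 = nv p.1.1.1) {k : ℕ} (hmax : ∀ i ≤ k, FibMax rE (p.1.2 i))
    {e' : ℰ} (hser : Serial rE (p.1.2 (k + 1)) e') : q.1.1.1 = minV (sE e') := by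
  rcases hpq with ⟨hlt, -⟩ | ⟨-, k', hk'max, hk'nmax, hk'ser, -, hk'min, -⟩
  · omega
  obtain rfl : k' = k + 1 := by
    rcases lt_trichotomy k' (k + 1) with h | h | h
    · exact absurd (hmax k' (by omega)) hk'nmax
    · exact h
    · exact absurd (hk'max (k + 1) h) hser.not_fibMax
  have hmin : ∀ i ≤ k, FibMin rE (q.1.2 i) := fun i hi => hk'min i (by omega)
  rw [← q.2.1, src_eq_of_fibMin_chain hminV hmin1 q.2.2 hmin, ← (hmin k le_rfl).minV_rE hminV,
    ← q.2.2 k, hk'ser.unique hser]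

variable [TopologicalSpace ℰ] [TopologicalSpace ((v : 𝒱) × Fin (nv v))]
  [DiscreteTopology ((v : 𝒱) × Fin (nv v))]

/-- The maximal path through `max(s(e))` is the limit of paths whose first carry happens at `e`;
continuity of `ψ` transfers the root vertex `min(s(e'))` of their images to the limit. -/
theorem IsVershikMap.head_maxLoopPath (hnv : ∀ v, 0 < nv v) (hs : Function.Surjective sE)
    (hmaxV : IsMaxSource sE rE maxV) (hminV : IsMinSource sE rE minV)
    (hmax1 : ∀ v, maxV v ∈ Vmax1 sE rE) (hmin1 : ∀ v, minV v ∈ Vmin1 sE rE)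
    {ψ : PathSp ℰ sE rE nv → PathSp ℰ sE rE nv} (hψ : IsVershikMap ψ) {e e' : ℰ}
    (hser : Serial rE e e') : (ψ (maxLoopPath nv hnv (hmax1 (sE e)))).1.1.1 = minV (sE e') := by
  obtain ⟨f, hf0, hf⟩ := exists_chain_of_surjective hs e
  obtain ⟨a, har, ha, hav⟩ := hmaxV (sE e)
  let t : ℕ → ℰ := fun | 0 => a | i + 1 => f i
  have ht : ∀ i, sE (t (i + 1)) = rE (t i) := by
    rintro (_ | i)
    exacts [(congrArg sE hf0).trans har.symm, hf i]
  let P := maxLoopPrefixPath nv hnv (hmax1 (sE e)) (t := t) hav.symm ht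
  have hmax : ∀ n, ∀ i ≤ n, FibMax rE ((P n).1.2 i) := fun n i hi => by
    by_cases h : i < n
    · simpa [P, maxLoopPrefixPath, h] using (hmax1 (sE e)).choose_spec.2.2
    · simpa [P, maxLoopPrefixPath, h, show i - n = 0 by omega, t] using ha
  have hcarry : ∀ n, (P n).1.2 (n + 1) = e := fun n => by
    simp [P, maxLoopPrefixPath, t, hf0]
  have hhead : ∀ n, (ψ (P n)).1.1.1 = minV (sE e') := fun n =>
    Succ.head_eq_minV hminV hmin1
      (hψ.2.2 _ fun hP => hser.not_fibMax (hcarry n ▸ hP.2 (n + 1)))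
      (Nat.sub_add_cancel (hnv _)) (hmax n) ((hcarry n).symm ▸ hser)
  have hlim := (((continuous_fst.comp continuous_subtype_val).comp hψ.1).tendsto _).comp
    (tendsto_maxLoopPrefixPath nv hnv (hmax1 (sE e)) hav.symm ht)
  rw [nhds_discrete, tendsto_pure] at hlim
  obtain ⟨n, hn⟩ := hlim.exists
  rw [← hhead n]
  exact congrArg Sigma.fst hn.symm

theorem IsVershikMap.exists_continuityCondition (hnv : ∀ v, 0 < nv v) (hs : Function.Surjective sE)
    (hmaxV : IsMaxSource sE rE maxV) (hminV : IsMinSource sE rE minV)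
    (hmax1 : ∀ v, maxV v ∈ Vmax1 sE rE) (hmin1 : ∀ v, minV v ∈ Vmin1 sE rE)
    (hstrMax : ∀ p : PathSp ℰ sE rE nv, IsMaxPath sE rE nv p → ∃ e, ∀ i, p.1.2 i = e)
    (hstrMin : ∀ p : PathSp ℰ sE rE nv, IsMinPath sE rE nv p → ∃ e, ∀ i, p.1.2 i = e)
    {ψ : PathSp ℰ sE rE nv → PathSp ℰ sE rE nv} (hψ : IsVershikMap ψ) :
    ∃ ψb, ContinuityCondition sE rE maxV minV ψb := by
  classical
  refine ⟨fun v => if hv : v ∈ Vmax1 sE rE then (ψ (maxLoopPath nv hnv hv)).1.1.1 else v,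
    fun v hv => ?_, fun w hw => ?_, fun e e' hser => ?_⟩
  · have hmin : ψ (maxLoopPath nv hnv hv) ∈ {p | IsMinPath sE rE nv p} :=
      hψ.2.1 ▸ ⟨_, isMaxPath_maxLoopPath nv hnv hv, rfl⟩
    simpa [hv] using hmin.head_mem_Vmin1 hstrMin
  · obtain ⟨m, hmw, hmr, hm⟩ := hw
    let Q : PathSp ℰ sE rE nv :=
      ⟨⟨⟨w, ⟨0, hnv w⟩⟩, fun _ => m⟩, hmw, fun _ => hmw.trans hmr.symm⟩
    obtain ⟨p, hp, hpQ⟩ : Q ∈ ψ '' {p | IsMaxPath sE rE nv p} := hψ.2.1 ▸ ⟨rfl, fun _ => hm⟩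
    obtain ⟨hv, hpP⟩ := hp.exists_eq_maxLoopPath nv hnv hstrMax
    exact ⟨_, hv, by dsimp only; rw [dif_pos hv, hpP, hpQ]⟩
  · simpa [hmax1 (sE e)] using hψ.head_maxLoopPath hnv hs hmaxV hminV hmax1 hmin1 hser

end Forward

section Construction

variable {𝒱 ℰ : Type} {sE rE : ℰ → 𝒱} (minE : 𝒱 → ℰ) {f : ℕ → ℰ} {k j : ℕ} {e' : ℰ}

/-- The edges of the successor of `f` when the carry replaces the edge at level `k` by `e'`. -/
def descendMin (sE : ℰ → 𝒱) (minE : 𝒱 → ℰ) (f : ℕ → ℰ) (k : ℕ) (e' : ℰ) (j : ℕ) : ℰ :=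
  if k < j then f j else (minE ∘ sE)^[k - j] e'

theorem descendMin_of_lt (h : k < j) : descendMin sE minE f k e' j = f j := if_pos h

theorem descendMin_self : descendMin sE minE f k e' k = e' := by simp [descendMin]

theorem descendMin_of_lt_self (h : j < k) :
    descendMin sE minE f k e' j = minE (sE (descendMin sE minE f k e' (j + 1))) := by
  unfold descendMin
  rw [if_neg (by omega), if_neg (by omega), show k - j = k - (j + 1) + 1 by omega,
    Function.iterate_succ_apply']
  rfl

theorem descendMin_congr {f' : ℕ → ℰ} {M : ℕ} (h : ∀ i ≤ M, f i = f' i) (hj : j ≤ M) :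
    descendMin sE minE f k e' j = descendMin sE minE f' k e' j := by
  unfold descendMin
  split_ifs
  exacts [h j hj, rfl]

theorem descendMin_chain (hminE : ∀ v, rE (minE v) = v) (hf : ∀ i, sE (f (i + 1)) = rE (f i))
    (he' : rE e' = rE (f k)) (i : ℕ) :
    sE (descendMin sE minE f k e' (i + 1)) = rE (descendMin sE minE f k e' i) := by
  rcases lt_trichotomy i k with h | rfl | h
  · rw [descendMin_of_lt_self minE h, hminE]
  · rw [descendMin_of_lt minE (Nat.lt_succ_self _), descendMin_self, he', hf]
  · rw [descendMin_of_lt minE (by omega), descendMin_of_lt minE h, hf]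

/-- Two steps below the carry the descent has reached the minimal loop at `u`. -/
theorem descendMin_eq_of_add_two_le {u : 𝒱} (hu : sE (minE u) = u)
    (he' : sE (minE (sE e')) = u) (h : j + 2 ≤ k) : descendMin sE minE f k e' j = minE u := by
  unfold descendMin
  rw [if_neg (by omega), show k - j = k - j - 2 + 2 by omega, Function.iterate_add_apply]
  simp only [Function.iterate_succ, Function.iterate_zero, Function.comp_apply, id, he']
  exact Function.iterate_fixed (by simp [hu]) _

end Construction

section Vershik

variable {𝒱 ℰ : Type} [PartialOrder ℰ] {sE rE : ℰ → 𝒱} {nv : 𝒱 → ℕ}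
  (hnv : ∀ v, 0 < nv v) (minE : 𝒱 → ℰ) (succE : ℰ → ℰ) (ψb : 𝒱 → 𝒱)
  {p : PathSp ℰ sE rE nv}

open Classical in
noncomputable def vershikRaw (p : PathSp ℰ sE rE nv) : ((v : 𝒱) × Fin (nv v)) × (ℕ → ℰ) :=
  if hi : (p.1.1.2 : ℕ) + 1 < nv p.1.1.1 then (⟨p.1.1.1, ⟨_, hi⟩⟩, p.1.2)
  else if hk : ∃ k, ¬ FibMax rE (p.1.2 k) then
    (⟨sE (descendMin sE minE p.1.2 (Nat.find hk) (succE (p.1.2 (Nat.find hk))) 0), ⟨0, hnv _⟩⟩,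
      descendMin sE minE p.1.2 (Nat.find hk) (succE (p.1.2 (Nat.find hk))))
  else (⟨ψb (sE (p.1.2 0)), ⟨0, hnv _⟩⟩, fun _ => minE (ψb (sE (p.1.2 0))))

theorem vershikRaw_of_lt (h : (p.1.1.2 : ℕ) + 1 < nv p.1.1.1) :
    vershikRaw hnv minE succE ψb p = (⟨p.1.1.1, ⟨_, h⟩⟩, p.1.2) :=
  dif_pos h

theorem vershikRaw_of_carry (htop : (p.1.1.2 : ℕ) + 1 = nv p.1.1.1) {k : ℕ}
    (hmax : ∀ i < k, FibMax rE (p.1.2 i)) (hk : ¬ FibMax rE (p.1.2 k)) :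
    vershikRaw hnv minE succE ψb p =
      (⟨sE (descendMin sE minE p.1.2 k (succE (p.1.2 k)) 0), ⟨0, hnv _⟩⟩,
        descendMin sE minE p.1.2 k (succE (p.1.2 k))) := by
  classical
  have hex : ∃ k, ¬ FibMax rE (p.1.2 k) := ⟨k, hk⟩
  have hfind : Nat.find hex = k :=
    (Nat.find_eq_iff hex).2 ⟨hk, fun i hi => not_not.2 (hmax i hi)⟩
  rw [vershikRaw, dif_neg (by omega), dif_pos hex]
  subst hfind
  rfl

theorem vershikRaw_of_forall_fibMax (htop : (p.1.1.2 : ℕ) + 1 = nv p.1.1.1)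
    (hmax : ∀ i, FibMax rE (p.1.2 i)) :
    vershikRaw hnv minE succE ψb p =
      (⟨ψb (sE (p.1.2 0)), ⟨0, hnv _⟩⟩, fun _ => minE (ψb (sE (p.1.2 0)))) := by
  rw [vershikRaw, dif_neg (by omega), dif_neg (not_exists_not.2 hmax)]

theorem vershikRaw_congr_of_carry {q : PathSp ℰ sE rE nv} (hqp : q.1.1 = p.1.1)
    (htop : (p.1.1.2 : ℕ) + 1 = nv p.1.1.1) {k M : ℕ} (hkM : k ≤ M)
    (hmax : ∀ i < k, FibMax rE (p.1.2 i)) (hk : ¬ FibMax rE (p.1.2 k))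
    (hqe : ∀ i ≤ M, q.1.2 i = p.1.2 i) :
    (vershikRaw hnv minE succE ψb q).1 = (vershikRaw hnv minE succE ψb p).1 ∧
      ∀ i ≤ M, (vershikRaw hnv minE succE ψb q).2 i = (vershikRaw hnv minE succE ψb p).2 i := by
  have htopq : (q.1.1.2 : ℕ) + 1 = nv q.1.1.1 := by rw [hqp]; exact htop
  have hmaxq : ∀ i < k, FibMax rE (q.1.2 i) := fun i hi => by
    rw [hqe i (by omega)]; exact hmax i hi
  have hkq : ¬ FibMax rE (q.1.2 k) := by rw [hqe k hkM]; exact hk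
  rw [vershikRaw_of_carry hnv minE succE ψb htop hmax hk,
    vershikRaw_of_carry hnv minE succE ψb htopq hmaxq hkq, hqe k hkM]
  have hd := fun i (hi : i ≤ M) =>
    descendMin_congr (sE := sE) minE (k := k) (e' := succE (p.1.2 k)) hqe hi
  exact ⟨by rw [hd 0 (Nat.zero_le _)], hd⟩

variable {maxV minV : 𝒱 → 𝒱}

/-- A carry at level `k ≥ n + 2` lands on `e'` with `min(s(e')) = ψb(max(s(p_k))) = ψb(s(p₀))`
by the continuity condition, so below `k - 1` the descent is the minimal loop over `ψb(s(p₀))`: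
the same edges as the image of a maximal path. -/
theorem vershikRaw_of_fibMax_prefix (hmaxV : IsMaxSource sE rE maxV)
    (hmax1 : ∀ v, maxV v ∈ Vmax1 sE rE) (hminE_src : ∀ v, minV v = sE (minE v))
    (hb3 : ∀ e e' : ℰ, Serial rE e e' → ψb (maxV (sE e)) = minV (sE e'))
    (hsuccE : ∀ e, ¬ FibMax rE e → Serial rE e (succE e))
    (hC : ∀ e, FibMax rE e → sE (minE (ψb (sE e))) = ψb (sE e))
    (htop : (p.1.1.2 : ℕ) + 1 = nv p.1.1.1) {n : ℕ} (hmax : ∀ i ≤ n + 1, FibMax rE (p.1.2 i)) :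
    (vershikRaw hnv minE succE ψb p).1 = ⟨ψb (sE (p.1.2 0)), ⟨0, hnv _⟩⟩ ∧
      (vershikRaw hnv minE succE ψb p).2 n = minE (ψb (sE (p.1.2 0))) := by
  classical
  by_cases hk : ∃ k, ¬ FibMax rE (p.1.2 k)
  swap
  · rw [vershikRaw_of_forall_fibMax hnv minE succE ψb htop (not_exists_not.1 hk)]
    exact ⟨rfl, rfl⟩
  set k := Nat.find hk
  have hnk : n + 2 ≤ k := by
    by_contra h
    exact Nat.find_spec hk (hmax k (by omega))
  have hmaxk : ∀ i < k, FibMax rE (p.1.2 i) := fun i hi => not_not.1 (Nat.find_min hk hi)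
  have hrange : sE (p.1.2 k) = rE (p.1.2 (k - 1)) := by
    rw [← p.2.2 (k - 1), Nat.sub_add_cancel (by omega)]
  have he' : sE (minE (sE (succE (p.1.2 k)))) = ψb (sE (p.1.2 0)) := by
    rw [← hminE_src, ← hb3 _ _ (hsuccE _ (Nat.find_spec hk)), hrange,
      (hmaxk (k - 1) (by omega)).maxV_rE hmaxV,
      ← src_eq_of_fibMax_chain (n := k - 1) hmaxV hmax1 p.2.2 fun i hi => hmaxk i (by omega)]
  have hu := hC _ (hmax 0 (by omega))
  have hd := fun j (hj : j + 2 ≤ k) => descendMin_eq_of_add_two_le minE (f := p.1.2) hu he' hj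
  rw [vershikRaw_of_carry hnv minE succE ψb htop hmaxk (Nat.find_spec hk)]
  exact ⟨sigmaFin_ext (by dsimp only; rw [hd 0 (by omega), hu]) rfl, hd n hnk⟩

theorem eventually_vershikRaw_eq [TopologicalSpace ℰ] [DiscreteTopology ℰ]
    [TopologicalSpace ((v : 𝒱) × Fin (nv v))] [DiscreteTopology ((v : 𝒱) × Fin (nv v))]
    (hmaxV : IsMaxSource sE rE maxV)
    (hmax1 : ∀ v, maxV v ∈ Vmax1 sE rE) (hminE_src : ∀ v, minV v = sE (minE v))
    (hb3 : ∀ e e' : ℰ, Serial rE e e' → ψb (maxV (sE e)) = minV (sE e'))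
    (hsuccE : ∀ e, ¬ FibMax rE e → Serial rE e (succE e))
    (hC : ∀ e, FibMax rE e → sE (minE (ψb (sE e))) = ψb (sE e)) (p : PathSp ℰ sE rE nv) (j : ℕ) :
    ∀ᶠ q in 𝓝 p, (vershikRaw hnv minE succE ψb q).1 = (vershikRaw hnv minE succE ψb p).1 ∧
      (vershikRaw hnv minE succE ψb q).2 j = (vershikRaw hnv minE succE ψb p).2 j := by
  classical
  have hcyl : ∀ M, ∀ᶠ q in 𝓝 p, q.1.1 = p.1.1 ∧ ∀ i ≤ M, q.1.2 i = p.1.2 i := fun M =>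
    (continuous_subtype_val.tendsto p).eventually (eventually_cylinder p.1 M)
  by_cases hi : (p.1.1.2 : ℕ) + 1 < nv p.1.1.1
  · filter_upwards [hcyl j] with q ⟨hqp, hqe⟩
    have hiq : (q.1.1.2 : ℕ) + 1 < nv q.1.1.1 := by rw [hqp]; exact hi
    rw [vershikRaw_of_lt hnv minE succE ψb hi, vershikRaw_of_lt hnv minE succE ψb hiq]
    exact ⟨sigmaFin_ext (congrArg Sigma.fst hqp :) (by dsimp only; rw [hqp]), hqe j le_rfl⟩
  have htop := PathSp.top_of_not_lt hi
  by_cases hk : ∃ k, ¬ FibMax rE (p.1.2 k)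
  · filter_upwards [hcyl (max j (Nat.find hk))] with q ⟨hqp, hqe⟩
    have h := vershikRaw_congr_of_carry hnv minE succE ψb hqp htop (le_max_right _ _)
      (fun i hi => not_not.1 (Nat.find_min hk hi)) (Nat.find_spec hk) hqe
    exact ⟨h.1, h.2 j (le_max_left _ _)⟩
  · have hmax := not_exists_not.1 hk
    filter_upwards [hcyl (j + 1)] with q ⟨hqp, hqe⟩
    have htopq : (q.1.1.2 : ℕ) + 1 = nv q.1.1.1 := by rw [hqp]; exact htop
    have hmaxq : ∀ i ≤ j + 1, FibMax rE (q.1.2 i) := fun i hi => by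
      rw [hqe i hi]; exact hmax i
    obtain ⟨hq1, hq2⟩ := vershikRaw_of_fibMax_prefix hnv minE succE ψb hmaxV hmax1 hminE_src hb3
      hsuccE hC htopq hmaxq
    obtain ⟨hp1, hp2⟩ := vershikRaw_of_fibMax_prefix hnv minE succE ψb hmaxV hmax1 hminE_src hb3
      hsuccE hC htop fun i _ => hmax i
    rw [hq1, hq2, hp1, hp2, hqe 0 (Nat.zero_le _)]
    exact ⟨rfl, rfl⟩

variable {minE succE ψb}

theorem vershikRaw_mem (hminE : ∀ v, rE (minE v) = v)
    (hsuccE : ∀ e, ¬ FibMax rE e → Serial rE e (succE e))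
    (hC : ∀ e, FibMax rE e → sE (minE (ψb (sE e))) = ψb (sE e)) (p : PathSp ℰ sE rE nv) :
    sE ((vershikRaw hnv minE succE ψb p).2 0) = (vershikRaw hnv minE succE ψb p).1.1 ∧
      ∀ i, sE ((vershikRaw hnv minE succE ψb p).2 (i + 1)) =
        rE ((vershikRaw hnv minE succE ψb p).2 i) := by
  classical
  by_cases hi : (p.1.1.2 : ℕ) + 1 < nv p.1.1.1
  · rw [vershikRaw_of_lt hnv minE succE ψb hi]
    exact p.2
  by_cases hk : ∃ k, ¬ FibMax rE (p.1.2 k)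
  · rw [vershikRaw_of_carry hnv minE succE ψb (PathSp.top_of_not_lt hi)
      (fun i hi => not_not.1 (Nat.find_min hk hi)) (Nat.find_spec hk)]
    exact ⟨rfl, descendMin_chain minE hminE p.2.2 (hsuccE _ (Nat.find_spec hk)).1⟩
  · rw [not_exists_not] at hk
    rw [vershikRaw_of_forall_fibMax hnv minE succE ψb (PathSp.top_of_not_lt hi) hk]
    exact ⟨hC _ (hk 0), fun _ => (hC _ (hk 0)).trans (hminE _).symm⟩

noncomputable def vershik (hminE : ∀ v, rE (minE v) = v)
    (hsuccE : ∀ e, ¬ FibMax rE e → Serial rE e (succE e))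
    (hC : ∀ e, FibMax rE e → sE (minE (ψb (sE e))) = ψb (sE e)) (p : PathSp ℰ sE rE nv) :
    PathSp ℰ sE rE nv :=
  ⟨vershikRaw hnv minE succE ψb p, vershikRaw_mem hnv hminE hsuccE hC p⟩

variable (hminE : ∀ v, rE (minE v) = v) (hsuccE : ∀ e, ¬ FibMax rE e → Serial rE e (succE e))
  (hC : ∀ e, FibMax rE e → sE (minE (ψb (sE e))) = ψb (sE e))

theorem vershik_val (p : PathSp ℰ sE rE nv) :
    (vershik hnv hminE hsuccE hC p).1 = vershikRaw hnv minE succE ψb p :=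
  rfl

theorem succ_vershik (hminE_min : ∀ v, FibMin rE (minE v)) (hp : ¬ IsMaxPath sE rE nv p) :
    Succ sE rE nv p (vershik hnv hminE hsuccE hC p) := by
  classical
  by_cases hi : (p.1.1.2 : ℕ) + 1 < nv p.1.1.1
  · left
    refine ⟨hi, ?_, ?_, ?_⟩ <;> rw [vershik_val, vershikRaw_of_lt hnv minE succE ψb hi]
  right
  have htop := PathSp.top_of_not_lt hi
  have hk : ∃ k, ¬ FibMax rE (p.1.2 k) := not_forall.1 fun h => hp ⟨htop, h⟩
  have hmax : ∀ i < Nat.find hk, FibMax rE (p.1.2 i) := fun i hi => not_not.1 (Nat.find_min hk hi)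
  have hraw := vershikRaw_of_carry hnv minE succE ψb htop hmax (Nat.find_spec hk)
  refine ⟨htop, Nat.find hk, hmax, Nat.find_spec hk, ?_, fun i hi => ?_, fun i hi => ?_, ?_⟩ <;>
    rw [vershik_val, hraw]
  · dsimp only
    rw [descendMin_self]
    exact hsuccE _ (Nat.find_spec hk)
  · exact descendMin_of_lt minE hi
  · dsimp only
    rw [descendMin_of_lt_self minE hi]
    exact hminE_min _

theorem image_vershik (hminE_min : ∀ v, FibMin rE (minE v))
    (hstrMin : ∀ p : PathSp ℰ sE rE nv, IsMinPath sE rE nv p → ∃ e, ∀ i, p.1.2 i = e)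
    (hb2 : ∀ w ∈ Vmin1 sE rE, ∃ v ∈ Vmax1 sE rE, ψb v = w) :
    vershik hnv hminE hsuccE hC '' {p | IsMaxPath sE rE nv p} = {p | IsMinPath sE rE nv p} := by
  refine subset_antisymm ?_ fun q hq => ?_
  · rintro _ ⟨p, hp, rfl⟩
    have hraw := vershikRaw_of_forall_fibMax hnv minE succE ψb hp.1 hp.2
    refine ⟨?_, fun _ => ?_⟩ <;> rw [vershik_val, hraw]
    exact hminE_min _
  obtain ⟨m, hqm⟩ := hstrMin q hq
  obtain ⟨hm, hmq⟩ := q.loop_of_const hqm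
  obtain ⟨v, hv, hvq⟩ := hb2 _ (hq.head_mem_Vmin1 hstrMin)
  have hP := isMaxPath_maxLoopPath nv hnv hv
  have hraw := vershikRaw_of_forall_fibMax hnv minE succE ψb hP.1 hP.2
  have hsrc : sE ((maxLoopPath nv hnv hv).1.2 0) = v := hv.choose_spec.1
  refine ⟨_, hP, pathSp_ext ?_ ?_ fun i => ?_⟩ <;> rw [vershik_val, hraw]
  · rw [hsrc, hvq]
  · exact hq.1.symm
  · rw [hsrc, hvq, hqm i]
    exact (hminE_min _).eq (hqm 0 ▸ hq.2 0) (by rw [hminE, ← hmq, hm])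

theorem continuous_vershik [TopologicalSpace ℰ] [DiscreteTopology ℰ]
    [TopologicalSpace ((v : 𝒱) × Fin (nv v))] [DiscreteTopology ((v : 𝒱) × Fin (nv v))]
    (hmaxV : IsMaxSource sE rE maxV) (hmax1 : ∀ v, maxV v ∈ Vmax1 sE rE)
    (hminE_src : ∀ v, minV v = sE (minE v))
    (hb3 : ∀ e e' : ℰ, Serial rE e e' → ψb (maxV (sE e)) = minV (sE e')) :
    Continuous (vershik hnv hminE hsuccE hC) :=
  (continuous_of_eventually_eq
    (eventually_vershikRaw_eq hnv minE succE ψb hmaxV hmax1 hminE_src hb3 hsuccE hC)).subtype_mk _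

end Vershik

theorem ContinuityCondition.exists_isVershikMap {𝒱 ℰ : Type} [Finite ℰ] [PartialOrder ℰ]
    [TopologicalSpace ℰ] [DiscreteTopology ℰ] {sE rE : ℰ → 𝒱} {nv : 𝒱 → ℕ}
    [TopologicalSpace ((v : 𝒱) × Fin (nv v))] [DiscreteTopology ((v : 𝒱) × Fin (nv v))]
    {maxV minV ψb : 𝒱 → 𝒱} (hnv : ∀ v, 0 < nv v)
    (hcomp : ∀ e e' : ℰ, rE e = rE e' ↔ (e ≤ e' ∨ e' ≤ e))
    (hmaxV : IsMaxSource sE rE maxV) (hminV : IsMinSource sE rE minV)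
    (hmax1 : ∀ v, maxV v ∈ Vmax1 sE rE)
    (hstrMin : ∀ p : PathSp ℰ sE rE nv, IsMinPath sE rE nv p → ∃ e, ∀ i, p.1.2 i = e)
    (hψb : ContinuityCondition sE rE maxV minV ψb) :
    ∃ ψ : PathSp ℰ sE rE nv → PathSp ℰ sE rE nv, IsVershikMap ψ := by
  obtain ⟨hb1, hb2, hb3⟩ := hψb
  choose minE hminE hminE_min hminE_src using hminV
  choose! succE hsuccE using fun e (he : ¬ FibMax rE e) => exists_serial_of_not_fibMax hcomp he
  have hC : ∀ e, FibMax rE e → sE (minE (ψb (sE e))) = ψb (sE e) := fun e he =>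
    ((hminE_min _).src_eq_rE ((hminE _).symm ▸ hb1 _ (he.src_mem_Vmax1 hmaxV hmax1))).trans
      (hminE _)
  exact ⟨vershik hnv hminE hsuccE hC,
    continuous_vershik hnv hminE hsuccE hC hmaxV hmax1 hminE_src hb3,
    image_vershik hnv hminE hsuccE hC hminE_min hstrMin hb2,
    fun _ hp => succ_vershik hnv hminE hsuccE hC hminE_min hp⟩

theorem stmt11_general {𝒱 ℰ : Type} [Fintype ℰ] [PartialOrder ℰ]
    [TopologicalSpace ℰ] [DiscreteTopology ℰ]
    (sE rE : ℰ → 𝒱) (nv : 𝒱 → ℕ)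
    [TopologicalSpace ((v : 𝒱) × Fin (nv v))]
    [DiscreteTopology ((v : 𝒱) × Fin (nv v))]
    (hs : Function.Surjective sE)
    (hnv : ∀ v, 0 < nv v)
    (hcomp : ∀ e e' : ℰ, rE e = rE e' ↔ (e ≤ e' ∨ e' ≤ e))
    (maxV minV : 𝒱 → 𝒱)
    (hmaxV : ∀ v, ∃ e, rE e = v ∧ FibMax rE e ∧ maxV v = sE e)
    (hminV : ∀ v, ∃ e, rE e = v ∧ FibMin rE e ∧ minV v = sE e)
    (hmax1 : ∀ v, maxV v ∈ Vmax1 sE rE) (hmin1 : ∀ v, minV v ∈ Vmin1 sE rE)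
    (hstrMax : ∀ p : PathSp ℰ sE rE nv, IsMaxPath sE rE nv p → ∃ e, ∀ i, p.1.2 i = e)
    (hstrMin : ∀ p : PathSp ℰ sE rE nv, IsMinPath sE rE nv p → ∃ e, ∀ i, p.1.2 i = e) :
    (∃ ψ : PathSp ℰ sE rE nv → PathSp ℰ sE rE nv,
      Continuous ψ ∧
      ψ '' {p | IsMaxPath sE rE nv p} = {p | IsMinPath sE rE nv p} ∧
      ∀ p, ¬ IsMaxPath sE rE nv p → Succ sE rE nv p (ψ p)) ↔
    (∃ ψb : 𝒱 → 𝒱,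
      (∀ v ∈ Vmax1 sE rE, ψb v ∈ Vmin1 sE rE) ∧
      (∀ w ∈ Vmin1 sE rE, ∃ v ∈ Vmax1 sE rE, ψb v = w) ∧
      (∀ e e' : ℰ, Serial rE e e' → ψb (maxV (sE e)) = minV (sE e'))) :=
  ⟨fun ⟨_, hψ⟩ =>
      IsVershikMap.exists_continuityCondition hnv hs hmaxV hminV hmax1 hmin1 hstrMax hstrMin hψ,
    fun ⟨_, hψb⟩ => ContinuityCondition.exists_isVershikMap hnv hcomp hmaxV hminV hmax1 hstrMin hψb⟩

/-- A straight ordered surjective mono-graph generates a Bratteli–Vershik model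
(a continuous Vershik map on the path space) if and only if it satisfies the
continuity condition. -/
theorem stmt11 {𝒱 ℰ : Type} [Fintype 𝒱] [Fintype ℰ] [PartialOrder ℰ]
    [TopologicalSpace ℰ] [DiscreteTopology ℰ]
    (sE rE : ℰ → 𝒱) (nv : 𝒱 → ℕ)
    [TopologicalSpace ((v : 𝒱) × Fin (nv v))]
    [DiscreteTopology ((v : 𝒱) × Fin (nv v))]
    (hr : Function.Surjective rE) (hs : Function.Surjective sE)
    (hnv : ∀ v, 0 < nv v)
    (hcomp : ∀ e e' : ℰ, rE e = rE e' ↔ (e ≤ e' ∨ e' ≤ e))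
    (maxV minV : 𝒱 → 𝒱)
    (hmaxV : ∀ v, ∃ e, rE e = v ∧ FibMax rE e ∧ maxV v = sE e)
    (hminV : ∀ v, ∃ e, rE e = v ∧ FibMin rE e ∧ minV v = sE e)
    (hmax1 : ∀ v, maxV v ∈ Vmax1 sE rE) (hmin1 : ∀ v, minV v ∈ Vmin1 sE rE)
    (hstrMax : ∀ p : PathSp ℰ sE rE nv, IsMaxPath sE rE nv p → ∃ e, ∀ i, p.1.2 i = e)
    (hstrMin : ∀ p : PathSp ℰ sE rE nv, IsMinPath sE rE nv p → ∃ e, ∀ i, p.1.2 i = e) :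
    (∃ ψ : PathSp ℰ sE rE nv → PathSp ℰ sE rE nv,
      Continuous ψ ∧
      ψ '' {p | IsMaxPath sE rE nv p} = {p | IsMinPath sE rE nv p} ∧
      ∀ p, ¬ IsMaxPath sE rE nv p → Succ sE rE nv p (ψ p)) ↔
    (∃ ψb : 𝒱 → 𝒱,
      (∀ v ∈ Vmax1 sE rE, ψb v ∈ Vmin1 sE rE) ∧
      (∀ w ∈ Vmin1 sE rE, ∃ v ∈ Vmax1 sE rE, ψb v = w) ∧
      (∀ e e' : ℰ, Serial rE e e' → ψb (maxV (sE e)) = minV (sE e'))) :=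
  stmt11_general sE rE nv hs hnv hcomp maxV minV hmaxV hminV hmax1 hmin1 hstrMax hstrMin
end

section
/- Let (V,E,≥,ψ) be a straight stationary Bratteli–Vershik model generated by a straight ordered surjective mono-graph (𝒱,ℰ,s,r,≥). Suppose p ∈ E_{0,∞}, n ≥ 1, v ∈ 𝒱_{max,1}, v' ∈ 𝒱_{min,1} satisfy p[0,n] = p_max(v)[0,n] and ψ(p)[0,n] = p_min(v')[0,n]. Then ψ(p_max(v)) = p_min(v'). -/
private lemma fibMax_unique {𝒱 ℰ : Type} [PartialOrder ℰ] {rE : ℰ → 𝒱} {e e' : ℰ}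
    (h : FibMax rE e) (h' : FibMax rE e') (hr : rE e = rE e') : e = e' :=
  le_antisymm (h' e hr) (h e' hr.symm)

private lemma fibMin_unique {𝒱 ℰ : Type} [PartialOrder ℰ] {rE : ℰ → 𝒱} {e e' : ℰ}
    (h : FibMin rE e) (h' : FibMin rE e') (hr : rE e = rE e') : e = e' :=
  le_antisymm (h e' hr.symm) (h' e hr)

private lemma serial_unique {𝒱 ℰ : Type} [PartialOrder ℰ] {rE : ℰ → 𝒱} {e a b : ℰ}
    (h : Serial rE e a) (h' : Serial rE e b) : a = b :=
  le_antisymm (h.2.2 b h'.1 h'.2.1) (h'.2.2 a h.1 h.2.1)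

private lemma sigmaFinExt {𝒱 : Type} {nv : 𝒱 → ℕ} :
    ∀ (x y : (v : 𝒱) × Fin (nv v)), x.1 = y.1 → ((x.2 : ℕ) = (y.2 : ℕ)) → x = y := by
  rintro ⟨a, i⟩ ⟨b, j⟩ h1 h2
  dsimp at h1 h2
  subst h1
  exact congrArg _ (Fin.ext h2)

/-- In a straight stationary Bratteli–Vershik model, if a path `p` agrees with the
straight maximal path `p_max(v)` up to level `n ≥ 1` and `ψ(p)` agrees with the
straight minimal path `p_min(v')` up to level `n`, then `ψ(p_max(v)) = p_min(v')`. -/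
theorem stmt12 {𝒱 ℰ : Type} [Fintype 𝒱] [Fintype ℰ] [PartialOrder ℰ]
    [TopologicalSpace ℰ] [DiscreteTopology ℰ]
    (sE rE : ℰ → 𝒱) (nv : 𝒱 → ℕ)
    [TopologicalSpace ((v : 𝒱) × Fin (nv v))]
    [DiscreteTopology ((v : 𝒱) × Fin (nv v))]
    (hr : Function.Surjective rE) (hs : Function.Surjective sE)
    (hnv : ∀ v, 0 < nv v)
    (hcomp : ∀ e e' : ℰ, rE e = rE e' ↔ (e ≤ e' ∨ e' ≤ e))
    (maxV minV : 𝒱 → 𝒱)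
    (hmaxV : ∀ v, ∃ e, rE e = v ∧ FibMax rE e ∧ maxV v = sE e)
    (hminV : ∀ v, ∃ e, rE e = v ∧ FibMin rE e ∧ minV v = sE e)
    (hmax1 : ∀ v, maxV v ∈ Vmax1 sE rE) (hmin1 : ∀ v, minV v ∈ Vmin1 sE rE)
    (hstrMax : ∀ p : PathSp ℰ sE rE nv, IsMaxPath sE rE nv p → ∃ e, ∀ i, p.1.2 i = e)
    (hstrMin : ∀ p : PathSp ℰ sE rE nv, IsMinPath sE rE nv p → ∃ e, ∀ i, p.1.2 i = e)
    (ψ : PathSp ℰ sE rE nv → PathSp ℰ sE rE nv)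
    (hcont : Continuous ψ)
    (him : ψ '' {p | IsMaxPath sE rE nv p} = {p | IsMinPath sE rE nv p})
    (hsucc : ∀ p, ¬ IsMaxPath sE rE nv p → Succ sE rE nv p (ψ p))
    (p pmax pmin : PathSp ℰ sE rE nv) (n : ℕ) (hn : 1 ≤ n) (v v' : 𝒱)
    (hv : v ∈ Vmax1 sE rE) (hv' : v' ∈ Vmin1 sE rE)
    (hpmax : IsMaxPath sE rE nv pmax ∧
      ∀ i, sE (pmax.1.2 i) = v ∧ rE (pmax.1.2 i) = v)
    (hpmin : IsMinPath sE rE nv pmin ∧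
      ∀ i, sE (pmin.1.2 i) = v' ∧ rE (pmin.1.2 i) = v')
    (hagree1 : p.1.1 = pmax.1.1 ∧ ∀ i, i + 2 ≤ n → p.1.2 i = pmax.1.2 i)
    (hagree2 : (ψ p).1.1 = pmin.1.1 ∧ ∀ i, i + 2 ≤ n → (ψ p).1.2 i = pmin.1.2 i) :
    ψ pmax = pmin := by
  obtain ⟨hpmaxP, hpmaxE⟩ := hpmax
  obtain ⟨hpminP, hpminE⟩ := hpmin
  obtain ⟨hidx1, hedge1⟩ := hagree1
  obtain ⟨hidx2, hedge2⟩ := hagree2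
  obtain ⟨nn, rfl⟩ : ∃ nn, n = nn + 1 := ⟨n - 1, by omega⟩
  have hpv : pmax.1.1.1 = v := (pmax.2.1).symm.trans (hpmaxE 0).1
  have hv'0 : pmin.1.1.1 = v' := (pmin.2.1).symm.trans (hpminE 0).1
  have hψmax_min : IsMinPath sE rE nv (ψ pmax) := by
    have : ψ pmax ∈ {q | IsMinPath sE rE nv q} := by
      rw [← him]; exact ⟨pmax, hpmaxP, rfl⟩
    exact this
  have key : (ψ pmax).1.1.1 = v' := by
    by_cases hpm : IsMaxPath sE rE nv p
    · -- then p = pmax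
      obtain ⟨e, he⟩ := hstrMax p hpm
      have hFe : FibMax rE e := he 0 ▸ hpm.2 0
      have hse : sE e = v := by rw [← he 0, p.2.1, hidx1, hpv]
      have hre : rE e = v := by
        have c := p.2.2 0
        rw [he 0, he 1] at c
        rw [← c, hse]
      have hpe : p = pmax := by
        apply Subtype.ext
        apply Prod.ext
        · exact hidx1
        · funext i
          rw [he i]
          exact fibMax_unique hFe (hpmaxP.2 i) (by rw [hre, (hpmaxE i).2])
      rw [← hpe, hidx2]
      exact hv'0
    · have hS := hsucc p hpm
      have hnvp : (p.1.1.2 : ℕ) + 1 = nv p.1.1.1 := by rw [hidx1]; exact hpmaxP.1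
      rcases hS with ⟨hlt, _⟩ | ⟨_, k, hkmax, hknot, hser, htail, hkmin, hψ0⟩
      · exact absurd hnvp (by omega)
      have hkn : nn ≤ k := by
        by_contra h
        push_neg at h
        exact hknot ((hedge1 k (by omega)).symm ▸ hpmaxP.2 k)
      have hsrc : sE (p.1.2 nn) = v := by
        rcases Nat.eq_zero_or_pos nn with h0 | h1
        · subst h0; rw [p.2.1, hidx1, hpv]
        · obtain ⟨t, rfl⟩ : ∃ t, nn = t + 1 := ⟨nn - 1, by omega⟩
          have c := p.2.2 t
          rw [c, hedge1 t (by omega), (hpmaxE t).2]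
      set Qe : ℕ → ℕ → ℰ := fun m i => if i ≤ m then pmax.1.2 i else p.1.2 (i - m - 1 + nn)
        with hQedef
      have hQeLe : ∀ m i, i ≤ m → Qe m i = pmax.1.2 i := by
        intro m i h; simp [hQedef, h]
      have hQeGt : ∀ m i, m < i → Qe m i = p.1.2 (i - m - 1 + nn) := by
        intro m i h; simp [hQedef, Nat.not_le.mpr h]
      have hQchain : ∀ m, sE (Qe m 0) = pmax.1.1.1 ∧ ∀ i, sE (Qe m (i + 1)) = rE (Qe m i) := by
        intro m
        constructor
        · rw [hQeLe m 0 (Nat.zero_le m)]; exact pmax.2.1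
        · intro i
          rcases lt_trichotomy i m with h | rfl | h
          · rw [hQeLe m (i + 1) (by omega), hQeLe m i (by omega)]
            exact pmax.2.2 i
          · rw [hQeGt i (i + 1) (by omega), hQeLe i i le_rfl]
            rw [show i + 1 - i - 1 + nn = nn from by omega, hsrc, (hpmaxE i).2]
          · rw [hQeGt m (i + 1) (by omega), hQeGt m i h]
            rw [show i + 1 - m - 1 + nn = (i - m - 1 + nn) + 1 from by omega]
            exact p.2.2 _
      set Q : ℕ → PathSp ℰ sE rE nv := fun m => ⟨⟨pmax.1.1, Qe m⟩, hQchain m⟩ with hQdef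
      have hQtend : Filter.Tendsto Q Filter.atTop (nhds pmax) := by
        rw [tendsto_subtype_rng]
        refine Filter.Tendsto.prodMk_nhds tendsto_const_nhds ?_
        rw [tendsto_pi_nhds]
        intro i
        refine tendsto_const_nhds.congr' ?_
        filter_upwards [Filter.eventually_ge_atTop i] with m hm
        exact (hQeLe m i hm).symm
      have hT : Filter.Tendsto (fun m => (ψ (Q m)).1.1) Filter.atTop (nhds ((ψ pmax)).1.1) := by
        have h1 := (hcont.tendsto pmax).comp hQtend
        exact ((continuous_fst.comp continuous_subtype_val).tendsto (ψ pmax)).comp h1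
      rw [nhds_discrete, Filter.tendsto_pure] at hT
      obtain ⟨m, hm1, hm2⟩ := (hT.and (Filter.eventually_ge_atTop (nn + 1))).exists
      obtain ⟨t, rfl⟩ : ∃ t, m = nn + 1 + t := ⟨m - (nn + 1), by omega⟩
      have hQK : Qe (nn + 1 + t) (t + 2 + k) = p.1.2 k := by
        rw [hQeGt _ _ (by omega),
          show t + 2 + k - (nn + 1 + t) - 1 + nn = k from by omega]
      have hQnotmax : ¬ IsMaxPath sE rE nv (Q (nn + 1 + t)) := by
        intro h
        apply hknot
        rw [← hQK]
        exact h.2 (t + 2 + k)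
      have hnvQ : ((Q (nn + 1 + t)).1.1.2 : ℕ) + 1 = nv (Q (nn + 1 + t)).1.1.1 := hpmaxP.1
      rcases hsucc _ hQnotmax with ⟨hlt', _⟩ | ⟨_, k', hkmax', hknot', hser', htail', hkmin', hψ0'⟩
      · exact absurd hnvQ (by omega)
      have hallmax : ∀ i, i < t + 2 + k → FibMax rE ((Q (nn + 1 + t)).1.2 i) := by
        intro i hi
        show FibMax rE (Qe (nn + 1 + t) i)
        rcases le_or_gt i (nn + 1 + t) with h | h
        · rw [hQeLe _ _ h]; exact hpmaxP.2 i
        · rw [hQeGt _ _ h]; exact hkmax _ (by omega)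
      have hk'K : k' = t + 2 + k := by
        rcases lt_trichotomy k' (t + 2 + k) with h | h | h
        · exact absurd (hallmax k' h) hknot'
        · exact h
        · exfalso
          apply hknot
          rw [← hQK]
          exact hkmax' _ h
      subst hk'K
      have hserQ : Serial rE (p.1.2 k) ((ψ (Q (nn + 1 + t))).1.2 (t + 2 + k)) := by
        rw [← hQK]; exact hser'
      have hKeq : (ψ (Q (nn + 1 + t))).1.2 (t + 2 + k) = (ψ p).1.2 k :=
        serial_unique hserQ hser
      have claimA : ∀ s, s ≤ k →
          (ψ (Q (nn + 1 + t))).1.2 (t + 2 + (k - s)) = (ψ p).1.2 (k - s) := by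
        intro s
        induction s with
        | zero => intro _; simpa using hKeq
        | succ s ih =>
          intro hs
          have h1 := ih (by omega)
          rw [show k - s = (k - (s + 1)) + 1 from by omega] at h1
          have hrq : rE ((ψ (Q (nn + 1 + t))).1.2 (t + 2 + (k - (s + 1)))) =
              rE ((ψ p).1.2 (k - (s + 1))) := by
            have c1 := (ψ (Q (nn + 1 + t))).2.2 (t + 2 + (k - (s + 1)))
            have c2 := (ψ p).2.2 (k - (s + 1))
            rw [show t + 2 + (k - (s + 1)) + 1 = t + 2 + ((k - (s + 1)) + 1) from by omega,
              h1] at c1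
            rw [← c1, ← c2]
          exact fibMin_unique (hkmin' _ (by omega)) (hkmin _ (by omega)) hrq
      have hD0 : (ψ (Q (nn + 1 + t))).1.2 (t + 2) = (ψ p).1.2 0 := by
        have h := claimA k le_rfl
        simpa using h
      have hpsi_src : sE ((ψ p).1.2 0) = v' := by
        rw [(ψ p).2.1, hidx2, hv'0]
      obtain ⟨e', hse', hre', hfmin'⟩ := hv'
      have claimB : ∀ s, 1 ≤ s → s ≤ t + 2 →
          (ψ (Q (nn + 1 + t))).1.2 (t + 2 - s) = e' := by
        intro s
        induction s with
        | zero => intro h _; exact absurd h (by omega)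
        | succ s ih =>
          intro _ hs
          have hrr : rE ((ψ (Q (nn + 1 + t))).1.2 (t + 2 - (s + 1))) = v' := by
            have c := (ψ (Q (nn + 1 + t))).2.2 (t + 2 - (s + 1))
            rcases Nat.eq_zero_or_pos s with rfl | hs1
            · rw [show t + 2 - (0 + 1) + 1 = t + 2 from by omega] at c
              rw [← c, hD0]
              exact hpsi_src
            · rw [show t + 2 - (s + 1) + 1 = t + 2 - s from by omega,
                ih (by omega) (by omega)] at c
              rw [← c, hse']
          exact fibMin_unique (hkmin' _ (by omega)) hfmin' (by rw [hrr, hre'])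
      have hQ0e : (ψ (Q (nn + 1 + t))).1.2 0 = e' := by
        have h := claimB (t + 2) (by omega) le_rfl
        simpa using h
      have hfin : (ψ (Q (nn + 1 + t))).1.1.1 = v' := by
        rw [← (ψ (Q (nn + 1 + t))).2.1, hQ0e, hse']
      rw [← hm1]
      exact hfin
  -- conclusion
  obtain ⟨e₀, he₀⟩ := hstrMin _ hψmax_min
  have hse0 : sE e₀ = v' := by rw [← he₀ 0, (ψ pmax).2.1, key]
  have hre0 : rE e₀ = v' := by
    have c := (ψ pmax).2.2 0
    rw [he₀ 0, he₀ 1] at c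
    rw [← c, hse0]
  have hf0 : FibMin rE e₀ := he₀ 0 ▸ hψmax_min.2 0
  apply Subtype.ext
  apply Prod.ext
  · exact sigmaFinExt _ _ (key.trans hv'0.symm) (by rw [hψmax_min.1, hpminP.1])
  · funext i
    rw [he₀ i]
    exact fibMin_unique hf0 (hpminP.2 i) (by rw [hre0, (hpminE i).2])
end

section
/- Let ℒ : l₁ < l₂ < ⋯ be a sequence of positive integers and let (V,E,≥,ψ) be a Bratteli–Vershik model that is ℒ-periodicity-regulated. Then for every n ≥ 0 and every constant infinite path (e_{n+1}, e_{n+2}, …) ∈ E_{n,∞} (meaning |r^{-1}(r(e_i))| = 1 for all i > n), the intersection ⋂_{m > n} Ū(s(e_m)) is a single periodic orbit of (E_{0,∞}, ψ) of least period l(s(e_{n+1})); in particular the model has closing property. -/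
set_option linter.unusedSectionVars false
set_option linter.unusedVariables false
set_option maxHeartbeats 1000000

/-- The space of infinite paths of a Bratteli diagram: `E n` is the set of edges from
level-`n` vertices `V n` to level-`(n+1)` vertices `V (n+1)`. -/
abbrev BPath (V E : ℕ → Type) (sE : ∀ n, E n → V n) (rE : ∀ n, E n → V (n + 1)) :
    Type :=
  {x : ∀ n, E n // ∀ n, sE (n + 1) (x (n + 1)) = rE n (x n)}

/-- An edge at level `n` is maximal in its range fiber. -/
def BFibMax {V E : ℕ → Type} [∀ n, PartialOrder (E n)]
    (rE : ∀ n, E n → V (n + 1)) (n : ℕ) (e : E n) : Prop :=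
  ∀ e', rE n e' = rE n e → e' ≤ e

/-- An edge at level `n` is minimal in its range fiber. -/
def BFibMin {V E : ℕ → Type} [∀ n, PartialOrder (E n)]
    (rE : ∀ n, E n → V (n + 1)) (n : ℕ) (e : E n) : Prop :=
  ∀ e', rE n e' = rE n e → e ≤ e'

/-- `e'` is the serial successor of `e` in its range fiber. -/
def BSerial {V E : ℕ → Type} [∀ n, PartialOrder (E n)]
    (rE : ∀ n, E n → V (n + 1)) (n : ℕ) (e e' : E n) : Prop :=
  rE n e' = rE n e ∧ e < e' ∧ ∀ e'', rE n e'' = rE n e → e < e'' → e' ≤ e''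

/-- `lcount0 n v` is the number of finite paths from the root to the vertex
`v ∈ V n`. -/
def lcount0 {V E : ℕ → Type} [∀ n, Fintype (E n)] [∀ n, DecidableEq (V n)]
    (sE : ∀ n, E n → V n) (rE : ∀ n, E n → V (n + 1)) : (n : ℕ) → V n → ℕ
  | 0, _ => 1
  | (n + 1), v => ∑ e : E n, if rE n e = v then lcount0 sE rE n (sE n e) else 0

lemma nat_card_sigma {ι : Type} [Fintype ι] (β : ι → Type) [∀ i, Finite (β i)] :
    Nat.card (Σ i, β i) = ∑ i, Nat.card (β i) := by
  classical
  letI : ∀ i, Fintype (β i) := fun i => Fintype.ofFinite _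
  simp [Nat.card_eq_fintype_card, Fintype.card_sigma]

section Aux

variable {V E : ℕ → Type} [∀ n, Fintype (V n)] [∀ n, Fintype (E n)]
    [∀ n, Nonempty (E n)] [∀ n, DecidableEq (V n)] [∀ n, PartialOrder (E n)]
    [Unique (V 0)]
    {sE : ∀ n, E n → V n} {rE : ∀ n, E n → V (n + 1)}

lemma lcount0_pos (hrsur : ∀ n (v : V (n + 1)), ∃ e : E n, rE n e = v) :
    ∀ n (v : V n), 0 < lcount0 sE rE n v
  | 0, _ => Nat.one_pos
  | (n + 1), v => by
    obtain ⟨e, he⟩ := hrsur n v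
    rw [lcount0]
    refine Finset.sum_pos' (fun i _ => Nat.zero_le _) ⟨e, Finset.mem_univ e, ?_⟩
    simpa [he] using lcount0_pos hrsur n (sE n e)

/-- Downward uniqueness: if two paths have fiber-distinguished edges below `k`
(e.g. fiber-max or fiber-min) and agree on the source at level `k`, they agree
below `k`. -/
lemma down_uniq {P : ∀ j, E j → Prop}
    (hP : ∀ j (e e' : E j), P j e → P j e' → rE j e = rE j e' → e = e')
    (x y : BPath V E sE rE) (k : ℕ)
    (hx : ∀ j, j < k → P j (x.1 j)) (hy : ∀ j, j < k → P j (y.1 j))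
    (hs : sE k (x.1 k) = sE k (y.1 k)) :
    ∀ j, j < k → x.1 j = y.1 j := by
  have aux : ∀ d j, j + d = k → sE j (x.1 j) = sE j (y.1 j) := by
    intro d
    induction d with
    | zero => intro j hj; simp only [Nat.add_zero] at hj; subst hj; exact hs
    | succ d ih =>
      intro j hj
      have h1 : sE (j + 1) (x.1 (j + 1)) = sE (j + 1) (y.1 (j + 1)) := ih (j + 1) (by omega)
      have h2 : rE j (x.1 j) = rE j (y.1 j) := by rw [← x.2 j, ← y.2 j, h1]
      have h3 : x.1 j = y.1 j := hP j _ _ (hx j (by omega)) (hy j (by omega)) h2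
      rw [h3]
  intro j hj
  have h1 : sE (j + 1) (x.1 (j + 1)) = sE (j + 1) (y.1 (j + 1)) :=
    aux (k - (j + 1)) (j + 1) (by omega)
  have h2 : rE j (x.1 j) = rE j (y.1 j) := by rw [← x.2 j, ← y.2 j, h1]
  exact hP j _ _ (hx j hj) (hy j hj) h2

lemma bfibmax_uniq : ∀ (j : ℕ) (e e' : E j), BFibMax rE j e → BFibMax rE j e' →
    rE j e = rE j e' → e = e' := fun _ e e' he he' hr =>
  le_antisymm (he' e hr) (he e' hr.symm)

lemma bfibmin_uniq : ∀ (j : ℕ) (e e' : E j), BFibMin rE j e → BFibMin rE j e' →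
    rE j e = rE j e' → e = e' := fun _ e e' he he' hr =>
  le_antisymm (he e' hr.symm) (he' e hr)

/-- A path obtained by modifying a given function at level `n` to `e` and
re-extending upward arbitrarily; below `n` it is unchanged. -/
noncomputable def modPath (sE : ∀ n, E n → V n) (rE : ∀ n, E n → V (n + 1))
    (hssur : ∀ n (v : V n), ∃ e : E n, sE n e = v) (x : ∀ j, E j) (n : ℕ) (e : E n) :
    ∀ j, E j
  | 0 => if h : n = 0 then h ▸ e else x 0
  | (j + 1) =>
    if j + 1 < n then x (j + 1)
    else if h : n = j + 1 then h ▸ e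
    else (hssur (j + 1) (rE j (modPath sE rE hssur x n e j))).choose

lemma modPath_lt (hssur : ∀ n (v : V n), ∃ e : E n, sE n e = v) (x : ∀ j, E j)
    (n : ℕ) (e : E n) : ∀ j, j < n → modPath sE rE hssur x n e j = x j := by
  intro j hj
  cases j with
  | zero => rw [modPath, dif_neg (by omega)]
  | succ j => rw [modPath, if_pos hj]

lemma modPath_self (hssur : ∀ n (v : V n), ∃ e : E n, sE n e = v) (x : ∀ j, E j)
    (n : ℕ) (e : E n) : modPath sE rE hssur x n e n = e := by
  cases n with
  | zero => rw [modPath]; simp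
  | succ j => rw [modPath]; simp

lemma modPath_compat (hssur : ∀ n (v : V n), ∃ e : E n, sE n e = v) (x : ∀ j, E j)
    (hx : ∀ j, sE (j + 1) (x (j + 1)) = rE j (x j))
    (n : ℕ) (e : E n) (hse : sE n e = sE n (x n)) :
    ∀ j, sE (j + 1) (modPath sE rE hssur x n e (j + 1)) =
      rE j (modPath sE rE hssur x n e j) := by
  intro j
  rcases lt_trichotomy (j + 1) n with h | h | h
  · rw [modPath_lt hssur x n e (j + 1) h, modPath_lt hssur x n e j (by omega), hx j]
  · subst h
    rw [modPath_self, modPath_lt hssur x (j + 1) e j (by omega), hse, hx j]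
  · have h1 : ¬ (j + 1 < n) := by omega
    have h2 : ¬ (n = j + 1) := by omega
    conv_lhs => rw [modPath]
    rw [if_neg h1, dif_neg h2]
    exact (hssur (j + 1) (rE j (modPath sE rE hssur x n e j))).choose_spec

/-- Some path exists. -/
noncomputable def basePath (rE : ∀ n, E n → V (n + 1)) [Nonempty (E 0)]
    (hssur : ∀ n (v : V n), ∃ e : E n, sE n e = v) : ∀ j, E j
  | 0 => Classical.arbitrary (E 0)
  | (j + 1) => (hssur (j + 1) (rE j (basePath rE hssur j))).choose

lemma basePath_compat [Nonempty (E 0)] (hssur : ∀ n (v : V n), ∃ e : E n, sE n e = v) :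
    ∀ j, sE (j + 1) (basePath (sE := sE) rE hssur (j + 1)) =
      rE j (basePath (sE := sE) rE hssur j) :=
  fun j => (hssur (j + 1) (rE j (basePath rE hssur j))).choose_spec

/-- There is an infinite path through every vertex. -/
lemma exists_path_through
    (hssur : ∀ n (v : V n), ∃ e : E n, sE n e = v)
    (hrsur : ∀ n (v : V (n + 1)), ∃ e : E n, rE n e = v) :
    ∀ n (v : V n), ∃ x : BPath V E sE rE, sE n (x.1 n) = v := by
  intro n
  induction n with
  | zero =>
    intro v
    exact ⟨⟨basePath rE hssur, basePath_compat hssur⟩, Subsingleton.elim _ _⟩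
  | succ n ih =>
    intro v
    obtain ⟨e, he⟩ := hrsur n v
    obtain ⟨x, hx⟩ := ih (sE n e)
    refine ⟨⟨modPath sE rE hssur x.1 n e, modPath_compat hssur x.1 x.2 n e hx.symm⟩, ?_⟩
    show sE (n + 1) (modPath sE rE hssur x.1 n e (n + 1)) = v
    rw [modPath_compat hssur x.1 x.2 n e hx.symm n, modPath_self, he]

/-- Splice: prefix from `z` below `n`, edge `e` at `n`, tail from `x` above `n`. -/
def splicePath (x z : ∀ j, E j) (n : ℕ) (e : E n) : ∀ j, E j :=
  fun j => if h : j < n then z j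
    else if h2 : j = n then cast (congrArg E h2.symm) e else x j

lemma splicePath_lt (x z : ∀ j, E j) (n : ℕ) (e : E n) :
    ∀ j, j < n → splicePath x z n e j = z j := fun j hj => dif_pos hj

lemma splicePath_self (x z : ∀ j, E j) (n : ℕ) (e : E n) :
    splicePath x z n e n = e := by
  rw [splicePath, dif_neg (lt_irrefl n), dif_pos rfl]
  rfl

lemma splicePath_gt (x z : ∀ j, E j) (n : ℕ) (e : E n) :
    ∀ j, n < j → splicePath x z n e j = x j := fun j hj => by
  rw [splicePath, dif_neg (by omega), dif_neg (by omega)]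

lemma splicePath_compat (x z : ∀ j, E j)
    (hx : ∀ j, sE (j + 1) (x (j + 1)) = rE j (x j))
    (hz : ∀ j, sE (j + 1) (z (j + 1)) = rE j (z j))
    (n : ℕ) (e : E n) (h1 : sE n e = sE n (z n)) (h2 : sE (n + 1) (x (n + 1)) = rE n e) :
    ∀ j, sE (j + 1) (splicePath x z n e (j + 1)) = rE j (splicePath x z n e j) := by
  intro j
  rcases lt_trichotomy (j + 1) n with h | h | h
  · rw [splicePath_lt x z n e (j + 1) h, splicePath_lt x z n e j (by omega), hz j]
  · subst h
    rw [splicePath_self, splicePath_lt x z (j + 1) e j (by omega), h1, hz j]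
  · rcases Nat.eq_or_lt_of_le h with h' | h'
    · have hj : j = n := by omega
      subst hj
      rw [splicePath_gt x z j e (j + 1) (by omega), splicePath_self, h2]
    · rw [splicePath_gt x z n e (j + 1) (by omega), splicePath_gt x z n e j (by omega), hx j]

lemma tailset_eq_finite (n : ℕ) (x0 : BPath V E sE rE) :
    Finite {x : BPath V E sE rE // ∀ m, n ≤ m → x.1 m = x0.1 m} := by
  refine Finite.of_injective (fun x => (fun j : Fin n => x.1.1 j.1 : ∀ j : Fin n, E j.1)) ?_
  intro a b h
  refine Subtype.ext (Subtype.ext (funext fun m => ?_))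
  rcases lt_or_ge m n with hm | hm
  · exact congrFun h ⟨m, hm⟩
  · rw [a.2 m hm, b.2 m hm]

/-- The number of paths with a prescribed tail from level `n` equals the number of
finite paths from the root to the level-`n` vertex of the tail. -/
lemma card_tailset
    (hssur : ∀ n (v : V n), ∃ e : E n, sE n e = v)
    (hrsur : ∀ n (v : V (n + 1)), ∃ e : E n, rE n e = v) :
    ∀ (n : ℕ) (x0 : BPath V E sE rE),
      Nat.card {x : BPath V E sE rE // ∀ m, n ≤ m → x.1 m = x0.1 m} =
        lcount0 sE rE n (sE n (x0.1 n)) := by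
  intro n
  induction n with
  | zero =>
    intro x0
    rw [lcount0, Nat.card_eq_one_iff_unique]
    constructor
    · constructor
      intro a b
      refine Subtype.ext (Subtype.ext (funext fun m => ?_))
      rw [a.2 m (Nat.zero_le m), b.2 m (Nat.zero_le m)]
    · exact ⟨x0, fun m _ => rfl⟩
  | succ n ih =>
    intro x0
    classical
    set B : E n → Type := fun e =>
      {x : BPath V E sE rE // x.1 n = e ∧ ∀ m, n + 1 ≤ m → x.1 m = x0.1 m} with hB
    have eqv : {x : BPath V E sE rE // ∀ m, n + 1 ≤ m → x.1 m = x0.1 m} ≃ Σ e : E n, B e :=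
      { toFun := fun x => ⟨x.1.1 n, x.1, rfl, x.2⟩
        invFun := fun y => ⟨y.2.1, y.2.2.2⟩
        left_inv := fun x => rfl
        right_inv := fun y => by
          obtain ⟨e, x, h1, h2⟩ := y
          subst h1
          rfl }
    haveI : Finite {x : BPath V E sE rE // ∀ m, n + 1 ≤ m → x.1 m = x0.1 m} :=
      tailset_eq_finite (n + 1) x0
    haveI hBfin : ∀ e, Finite (B e) := by
      intro e
      refine Finite.of_injective
        (fun x => (⟨x.1, x.2.2⟩ :
          {x : BPath V E sE rE // ∀ m, n + 1 ≤ m → x.1 m = x0.1 m})) ?_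
      intro a b h
      simp only [Subtype.mk.injEq] at h
      exact Subtype.ext h
    rw [Nat.card_congr eqv, nat_card_sigma B, lcount0]
    refine Finset.sum_congr rfl ?_
    intro e _
    by_cases h : rE n e = sE (n + 1) (x0.1 (n + 1))
    · rw [if_pos h]
      obtain ⟨z, hz⟩ := exists_path_through hssur hrsur n (sE n e)
      have h2 : sE (n + 1) (x0.1 (n + 1)) = rE n e := h.symm
      set w : BPath V E sE rE :=
        ⟨splicePath x0.1 z.1 n e,
          splicePath_compat x0.1 z.1 x0.2 z.2 n e hz.symm h2⟩ with hw
      have hwn : w.1 n = e := splicePath_self x0.1 z.1 n e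
      have hwgt : ∀ m, n + 1 ≤ m → w.1 m = x0.1 m := fun m hm =>
        splicePath_gt x0.1 z.1 n e m (by omega)
      have hcond : ∀ x : BPath V E sE rE,
          (x.1 n = e ∧ ∀ m, n + 1 ≤ m → x.1 m = x0.1 m) ↔
            (∀ m, n ≤ m → x.1 m = w.1 m) := by
        intro x
        constructor
        · rintro ⟨h1, h2'⟩ m hm
          rcases Nat.eq_or_lt_of_le hm with h' | h'
          · subst h'
            rw [h1, hwn]
          · rw [h2' m h', hwgt m h']
        · intro hx
          exact ⟨by rw [hx n le_rfl, hwn], fun m hm => by rw [hx m (by omega), hwgt m hm]⟩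
      have heqv2 : B e ≃ {x : BPath V E sE rE // ∀ m, n ≤ m → x.1 m = w.1 m} :=
        Equiv.subtypeEquivRight hcond
      rw [Nat.card_congr heqv2, ih w, hwn]
    · rw [if_neg h]
      have : IsEmpty (B e) := by
        constructor
        rintro ⟨x, h1, h2⟩
        apply h
        rw [← h1, ← x.2 n, h2 (n + 1) le_rfl]
      simp only [Nat.card_of_isEmpty]

/-- The auxiliary strict "reverse lexicographic" relation on paths. -/
def BRel {V E : ℕ → Type} [∀ n, PartialOrder (E n)] {sE : ∀ n, E n → V n}
    {rE : ∀ n, E n → V (n + 1)} (x y : BPath V E sE rE) : Prop :=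
  ∃ k, (∀ i, k < i → x.1 i = y.1 i) ∧ x.1 k < y.1 k

lemma brel_trans {x y z : BPath V E sE rE} (h1 : BRel x y) (h2 : BRel y z) :
    BRel x z := by
  obtain ⟨k1, ha1, hb1⟩ := h1
  obtain ⟨k2, ha2, hb2⟩ := h2
  rcases lt_trichotomy k1 k2 with h | h | h
  · exact ⟨k2, fun i hi => (ha1 i (by omega)).trans (ha2 i hi),
      by rw [ha1 k2 h]; exact hb2⟩
  · subst h
    exact ⟨k1, fun i hi => (ha1 i hi).trans (ha2 i hi), lt_trans hb1 hb2⟩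
  · exact ⟨k1, fun i hi => (ha1 i hi).trans (ha2 i (by omega)),
      by rw [← ha2 k1 h]; exact hb1⟩

lemma brel_ne {x y : BPath V E sE rE} (h : BRel x y) : x ≠ y := by
  rintro rfl
  obtain ⟨k, -, hb⟩ := h
  exact lt_irrefl _ hb

lemma brel_chain {f : ℕ → BPath V E sE rE} {N : ℕ}
    (h : ∀ i, i < N → BRel (f i) (f (i + 1))) :
    ∀ i j, i < j → j ≤ N → BRel (f i) (f j) := by
  intro i j
  induction j with
  | zero => omega
  | succ j ih =>
    intro hij hjN
    rcases Nat.eq_or_lt_of_le (Nat.lt_succ_iff.mp hij) with h' | h'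
    · subst h'
      exact h i (by omega)
    · exact brel_trans (ih h' (by omega)) (h j (by omega))

end Aux

/-- In an `ℒ`-periodicity-regulated Bratteli–Vershik model, for every constant
infinite path from level `n` the nested intersection of the towers `Ū(s(e_m))` is a
single periodic orbit of least period `l(s(e_{n+1}))`; in particular the model has
closing property. -/
theorem stmt14 (V E : ℕ → Type) [∀ n, Fintype (V n)] [∀ n, Fintype (E n)]
    [∀ n, Nonempty (E n)] [∀ n, DecidableEq (V n)] [∀ n, PartialOrder (E n)]
    [∀ n, TopologicalSpace (E n)] [∀ n, DiscreteTopology (E n)] [Unique (V 0)]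
    (sE : ∀ n, E n → V n) (rE : ∀ n, E n → V (n + 1))
    (hrsur : ∀ n (v : V (n + 1)), ∃ e : E n, rE n e = v)
    (hssur : ∀ n (v : V n), ∃ e : E n, sE n e = v)
    (hcomp : ∀ n (e e' : E n), rE n e = rE n e' ↔ (e ≤ e' ∨ e' ≤ e))
    (ψ : BPath V E sE rE → BPath V E sE rE)
    (hcont : Continuous ψ)
    (him : ψ '' {x | ∀ n, BFibMax rE n (x.1 n)} = {x | ∀ n, BFibMin rE n (x.1 n)})
    (hsucc : ∀ x : BPath V E sE rE, ¬ (∀ n, BFibMax rE n (x.1 n)) →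
      ∃ k, ¬ BFibMax rE k (x.1 k) ∧ (∀ i, i < k → BFibMax rE i (x.1 i)) ∧
        BSerial rE k (x.1 k) ((ψ x).1 k) ∧ (∀ i, k < i → (ψ x).1 i = x.1 i) ∧
        (∀ i, i < k → BFibMin rE i ((ψ x).1 i)))
    (lseq : ℕ → ℕ) (hmono : StrictMono lseq) (hlpos : ∀ n, 0 < lseq n)
    (hreg : ∀ n, 0 < n → ∀ v : V n, lcount0 sE rE n v ≤ lseq n →
      ∃ p : BPath V E sE rE, ψ^[lcount0 sE rE n v] p = p ∧
        (∀ j, 0 < j → j < lcount0 sE rE n v → ψ^[j] p ≠ p) ∧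
        ∀ k, sE n ((ψ^[k] p).1 n) = v) :
    ∀ n (c : ∀ m, E m),
      (∀ m, n ≤ m → sE (m + 1) (c (m + 1)) = rE m (c m)) →
      (∀ m, n ≤ m → ∀ e' : E m, rE m e' = rE m (c m) → e' = c m) →
      ∃ p : BPath V E sE rE,
        ψ^[lcount0 sE rE n (sE n (c n))] p = p ∧
        (∀ j, 0 < j → j < lcount0 sE rE n (sE n (c n)) → ψ^[j] p ≠ p) ∧
        {x : BPath V E sE rE | ∀ m, n ≤ m → sE m (x.1 m) = sE m (c m)} =
          {x : BPath V E sE rE |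
            ∃ i, i < lcount0 sE rE n (sE n (c n)) ∧ x = ψ^[i] p} := by
  intro n c hcpath huniq
  classical
  set L := lcount0 sE rE n (sE n (c n)) with hLdef
  have hLpos : 0 < L := lcount0_pos hrsur n _
  have cmax : ∀ j, n ≤ j → BFibMax rE j (c j) := fun j hj e' he' =>
    le_of_eq (huniq j hj e' he')
  have down : ∀ (y : BPath V E sE rE) (m : ℕ), n ≤ m → sE m (y.1 m) = sE m (c m) →
      ∀ j, n ≤ j → j < m → y.1 j = c j := by
    intro y m hnm hsm
    have aux : ∀ d j, n ≤ j → j + d = m → sE j (y.1 j) = sE j (c j) := by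
      intro d
      induction d with
      | zero => intro j hj hj2; simp only [Nat.add_zero] at hj2; subst hj2; exact hsm
      | succ d ih =>
        intro j hj hj2
        have h1 := ih (j + 1) (by omega) (by omega)
        have h2 : rE j (y.1 j) = rE j (c j) := by rw [← y.2 j, h1, hcpath j hj]
        rw [huniq j hj _ h2]
    intro j hj hjm
    have h1 := aux (m - (j + 1)) (j + 1) (by omega) (by omega)
    have h2 : rE j (y.1 j) = rE j (c j) := by rw [← y.2 j, h1, hcpath j hj]
    exact huniq j hj _ h2
  have lstab : ∀ m, n ≤ m → lcount0 sE rE m (sE m (c m)) = L := by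
    intro m hm
    induction m, hm using Nat.le_induction with
    | base => rfl
    | succ m hm ih =>
      rw [lcount0, Finset.sum_eq_single (c m)]
      · rw [if_pos (hcpath m hm).symm, ih]
      · intro b _ hb
        rw [if_neg]
        intro hbc
        exact hb (huniq m hm b (by rw [hbc, hcpath m hm]))
      · intro hc
        exact absurd (Finset.mem_univ _) hc
  have hlseq : ∀ m : ℕ, m ≤ lseq m := fun m => hmono.le_apply
  have lemA : ∀ m, n < m → L ≤ m → ∃ x : BPath V E sE rE,
      (∀ j, j < n → BFibMax rE j (x.1 j)) ∧ (∀ j, n ≤ j → j < m → x.1 j = c j) ∧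
      (∀ j, j < n → BFibMin rE j ((ψ x).1 j)) ∧
      (∀ j, n ≤ j → j < m → (ψ x).1 j = c j) := by
    intro m hm1 hm2
    have hL : lcount0 sE rE m (sE m (c m)) = L := lstab m hm1.le
    obtain ⟨q, hq1, -, hq3⟩ := hreg m (by omega) (sE m (c m))
      (by rw [hL]; exact hm2.trans (hlseq m))
    rw [hL] at hq1
    have OC : ∀ k j, n ≤ j → j < m → (ψ^[k] q).1 j = c j := fun k j hj hjm =>
      down (ψ^[k] q) m hm1.le (hq3 k) j hj hjm
    have hex : ∃ k, k ≤ L ∧ ∀ j, j < n → BFibMax rE j ((ψ^[k] q).1 j) := by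
      by_contra hnex
      push_neg at hnex
      have hstep : ∀ k, k < L → BRel (ψ^[k] q) (ψ^[k + 1] q) := by
        intro k hk
        obtain ⟨j0, hj0n, hj0⟩ := hnex k hk.le
        have hnm : ¬ (∀ i, BFibMax rE i ((ψ^[k] q).1 i)) := fun hall => hj0 (hall j0)
        obtain ⟨k', hk1, hk2, hk3, hk4, hk5⟩ := hsucc _ hnm
        have hkn : k' < n := by
          by_contra hge
          push_neg at hge
          rcases lt_or_ge k' m with hlt | hge2
          · exact hk1 (by rw [OC k k' hge hlt]; exact cmax k' hge)
          · exact hj0 (hk2 j0 (by omega))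
        rw [Function.iterate_succ_apply']
        exact ⟨k', fun i hi => (hk4 i hi).symm, hk3.2.1⟩
      have hcy : BRel q (ψ^[L] q) := by
        simpa using brel_chain hstep 0 L hLpos le_rfl
      rw [hq1] at hcy
      exact brel_ne hcy rfl
    obtain ⟨k0, hk0L, hk0⟩ := hex
    refine ⟨ψ^[k0] q, hk0, fun j hj hjm => OC k0 j hj hjm, ?_, ?_⟩
    · by_cases hall : ∀ i, BFibMax rE i ((ψ^[k0] q).1 i)
      · have hmem : ψ (ψ^[k0] q) ∈ {x : BPath V E sE rE | ∀ i, BFibMin rE i (x.1 i)} := by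
          rw [← him]
          exact ⟨_, hall, rfl⟩
        exact fun j _ => hmem j
      · obtain ⟨k', hk1, hk2, hk3, hk4, hk5⟩ := hsucc _ hall
        have hkn : n ≤ k' := by
          by_contra hlt
          exact hk1 (hk0 k' (by omega))
        exact fun j hj => hk5 j (by omega)
    · intro j hj hjm
      have hoc := OC (k0 + 1) j hj hjm
      rwa [Function.iterate_succ_apply'] at hoc
  have hexA : ∀ m : ℕ, ∃ x : BPath V E sE rE,
      (∀ j, j < n → BFibMax rE j (x.1 j)) ∧
      (∀ j, n ≤ j → j < m + n + 1 → x.1 j = c j) ∧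
      (∀ j, j < n → BFibMin rE j ((ψ x).1 j)) ∧
      (∀ j, n ≤ j → j < m + n + 1 → (ψ x).1 j = c j) := by
    intro m
    obtain ⟨x, h1, h2, h3, h4⟩ := lemA (max (m + n + 1) (max (n + 1) L))
      (lt_of_lt_of_le (Nat.lt_succ_self n) (le_trans (le_max_left _ _) (le_max_right _ _)))
      (le_trans (le_max_right _ _) (le_max_right _ _))
    exact ⟨x, h1, fun j hj hjm => h2 j hj (lt_of_lt_of_le hjm (le_max_left _ _)), h3,
      fun j hj hjm => h4 j hj (lt_of_lt_of_le hjm (le_max_left _ _))⟩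
  choose xs hxs1 hxs2 hxs3 hxs4 using hexA
  have STAB : ∀ m m' j, j ≤ m + n → j ≤ m' + n → (xs m).1 j = (xs m').1 j := by
    intro m m' j hm hm'
    rcases lt_or_ge j n with hj | hj
    · exact down_uniq bfibmax_uniq (xs m) (xs m') n (hxs1 m) (hxs1 m')
        (by rw [hxs2 m n le_rfl (by omega), hxs2 m' n le_rfl (by omega)]) j hj
    · rw [hxs2 m j hj (by omega), hxs2 m' j hj (by omega)]
  have xmax_compat : ∀ j, sE (j + 1) ((xs (j + 1)).1 (j + 1)) = rE j ((xs j).1 j) := by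
    intro j
    rw [STAB j (j + 1) j (by omega) (by omega)]
    exact (xs (j + 1)).2 j
  set xmax : BPath V E sE rE := ⟨fun j => (xs j).1 j, xmax_compat⟩ with hxmax
  have XM1 : ∀ j, j < n → BFibMax rE j (xmax.1 j) := fun j hj => hxs1 j j hj
  have XM2 : ∀ j, n ≤ j → xmax.1 j = c j := fun j hj => hxs2 j j hj (by omega)
  have TX : Filter.Tendsto xs Filter.atTop (nhds xmax) := by
    rw [tendsto_subtype_rng, tendsto_pi_nhds]
    intro j
    rw [nhds_discrete, Filter.tendsto_pure]
    filter_upwards [Filter.eventually_ge_atTop j] with m hm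
    exact STAB m j j (by omega) (by omega)
  set p : BPath V E sE rE := ψ xmax with hp
  have TP : Filter.Tendsto (fun m => ψ (xs m)) Filter.atTop (nhds p) :=
    (hcont.tendsto xmax).comp TX
  have PC : ∀ j : ℕ, ∀ᶠ m in Filter.atTop, (ψ (xs m)).1 j = p.1 j := by
    intro j
    rw [tendsto_subtype_rng, tendsto_pi_nhds] at TP
    have h := TP j
    rw [nhds_discrete, Filter.tendsto_pure] at h
    exact h
  have P1 : ∀ j, n ≤ j → p.1 j = c j := by
    intro j hj
    obtain ⟨m, hm1, hm2⟩ := ((PC j).and (Filter.eventually_ge_atTop j)).exists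
    rw [← hm1]
    exact hxs4 m j hj (by omega)
  have P2 : ∀ j, j < n → BFibMin rE j (p.1 j) := by
    intro j hj
    obtain ⟨m, hm⟩ := (PC j).exists
    rw [← hm]
    exact hxs3 m j hj
  set inA : BPath V E sE rE → Prop := fun x => ∀ m, n ≤ m → x.1 m = c m with hinA
  have pA : inA p := P1
  have xmax_uniq : ∀ x : BPath V E sE rE, inA x → (∀ j, BFibMax rE j (x.1 j)) → x = xmax := by
    intro x hx hmax
    refine Subtype.ext (funext fun j => ?_)
    rcases lt_or_ge j n with hj | hj
    · exact down_uniq bfibmax_uniq x xmax n (fun i _ => hmax i) XM1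
        (by rw [hx n le_rfl, XM2 n le_rfl]) j hj
    · rw [hx j hj, XM2 j hj]
  have STEP : ∀ x : BPath V E sE rE, inA x → x ≠ xmax →
      ∃ k, k < n ∧ ¬ BFibMax rE k (x.1 k) ∧ (∀ i, i < k → BFibMax rE i (x.1 i)) ∧
        BSerial rE k (x.1 k) ((ψ x).1 k) ∧ (∀ i, k < i → (ψ x).1 i = x.1 i) ∧
        (∀ i, i < k → BFibMin rE i ((ψ x).1 i)) := by
    intro x hx hne
    have hnall : ¬ (∀ i, BFibMax rE i (x.1 i)) := fun h => hne (xmax_uniq x hx h)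
    obtain ⟨k, hk1, hk2, hk3, hk4, hk5⟩ := hsucc x hnall
    have hkn : k < n := by
      by_contra hge
      push_neg at hge
      exact hk1 (by rw [hx k hge]; exact cmax k hge)
    exact ⟨k, hkn, hk1, hk2, hk3, hk4, hk5⟩
  have stepA : ∀ x, inA x → x ≠ xmax → inA (ψ x) := by
    intro x hx hne m hm
    obtain ⟨k, hkn, -, -, -, hk4, -⟩ := STEP x hx hne
    rw [hk4 m (by omega), hx m hm]
  have step_rel : ∀ x, inA x → x ≠ xmax → BRel x (ψ x) := by
    intro x hx hne
    obtain ⟨k, hkn, -, -, hk3, hk4, -⟩ := STEP x hx hne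
    exact ⟨k, fun i hi => (hk4 i hi).symm, hk3.2.1⟩
  have step_ne_p : ∀ x, inA x → x ≠ xmax → ψ x ≠ p := by
    intro x hx hne heq
    obtain ⟨k, hkn, -, -, hk3, -, -⟩ := STEP x hx hne
    have h1 : rE k (x.1 k) = rE k (p.1 k) := by rw [← heq]; exact hk3.1.symm
    have h3 : p.1 k ≤ x.1 k := P2 k hkn (x.1 k) h1
    have h2 : x.1 k < p.1 k := heq ▸ hk3.2.1
    exact absurd (lt_of_lt_of_le h2 h3) (lt_irrefl _)
  have INJ : ∀ x y, inA x → inA y → x ≠ xmax → y ≠ xmax → ψ x = ψ y → x = y := by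
    intro x y hxA hyA hxm hym heq
    obtain ⟨kx, hkxn, hx1, hx2, hx3, hx4, hx5⟩ := STEP x hxA hxm
    obtain ⟨ky, hkyn, hy1, hy2, hy3, hy4, hy5⟩ := STEP y hyA hym
    have hkk : kx = ky := by
      by_contra hne
      rcases lt_or_gt_of_ne hne with h | h
      · have hmin := hy5 kx h
        rw [← heq] at hmin
        exact absurd (lt_of_lt_of_le hx3.2.1 (hmin (x.1 kx) hx3.1.symm)) (lt_irrefl _)
      · have hmin := hx5 ky h
        rw [heq] at hmin
        exact absurd (lt_of_lt_of_le hy3.2.1 (hmin (y.1 ky) hy3.1.symm)) (lt_irrefl _)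
    subst hkk
    have hsame : rE kx (x.1 kx) = rE kx (y.1 kx) := by
      rw [← hx3.1, heq, hy3.1]
    have hedge : x.1 kx = y.1 kx := by
      rcases (hcomp kx _ _).mp hsame with hle | hle
      · rcases lt_or_eq_of_le hle with hlt | he
        · have hser := hx3.2.2 (y.1 kx) hsame.symm hlt
          have h2 : y.1 kx < (ψ x).1 kx := by rw [heq]; exact hy3.2.1
          exact absurd (lt_of_lt_of_le h2 hser) (lt_irrefl _)
        · exact he
      · rcases lt_or_eq_of_le hle with hlt | he
        · have hser := hy3.2.2 (x.1 kx) hsame hlt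
          have h2 : x.1 kx < (ψ y).1 kx := by rw [← heq]; exact hx3.2.1
          exact absurd (lt_of_lt_of_le h2 hser) (lt_irrefl _)
        · exact he.symm
    refine Subtype.ext (funext fun j => ?_)
    rcases lt_trichotomy j kx with hj | hj | hj
    · exact down_uniq bfibmax_uniq x y kx hx2 hy2 (by rw [hedge]) j hj
    · rw [hj]; exact hedge
    · rw [← hx4 j hj, heq, hy4 j hj]
  haveI finA : Finite {x : BPath V E sE rE // inA x} := by
    refine Finite.of_injective (fun x => (fun j : Fin n => x.1.1 j.1 : ∀ j : Fin n, E j.1)) ?_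
    intro a b h
    refine Subtype.ext (Subtype.ext (funext fun m => ?_))
    rcases lt_or_ge m n with hm | hm
    · exact congrFun h ⟨m, hm⟩
    · rw [a.2 m hm, b.2 m hm]
  have HIT : ∀ x : BPath V E sE rE, inA x → ∃ s, ψ^[s] x = xmax := by
    intro x hx
    by_contra hnot
    push_neg at hnot
    have mem : ∀ s, inA (ψ^[s] x) := by
      intro s
      induction s with
      | zero => exact hx
      | succ s ih => rw [Function.iterate_succ_apply']; exact stepA _ ih (hnot s)
    have incr : ∀ s, BRel (ψ^[s] x) (ψ^[s + 1] x) := by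
      intro s
      rw [Function.iterate_succ_apply']
      exact step_rel _ (mem s) (hnot s)
    have inj : Function.Injective (fun s => (⟨ψ^[s] x, mem s⟩ : {y // inA y})) := by
      intro s u hsu
      by_contra hne
      have key : ∀ a b : ℕ, a < b → ψ^[a] x ≠ ψ^[b] x := by
        intro a b hab
        exact brel_ne (brel_chain (N := b) (fun i _ => incr i) a b hab le_rfl)
      have hval := congrArg Subtype.val hsu
      simp only at hval
      rcases lt_or_gt_of_ne hne with h | h
      · exact key s u h hval
      · exact key u s h hval.symm
    haveI := Finite.of_injective _ inj
    exact not_finite ℕ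
  have hitp := HIT p pA
  set t := Nat.find hitp with ht
  have tmax : ψ^[t] p = xmax := Nat.find_spec hitp
  have tmin : ∀ i, i < t → ψ^[i] p ≠ xmax := fun i hi => Nat.find_min hitp hi
  have ORBA : ∀ i, i ≤ t → inA (ψ^[i] p) := by
    intro i hi
    induction i with
    | zero => exact pA
    | succ i ih =>
      rw [Function.iterate_succ_apply']
      exact stepA _ (ih (by omega)) (tmin i (by omega))
  have CH : ∀ i, i < t → BRel (ψ^[i] p) (ψ^[i + 1] p) := by
    intro i hi
    rw [Function.iterate_succ_apply']
    exact step_rel _ (ORBA i hi.le) (tmin i hi)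
  have NE : ∀ i j, i < j → j ≤ t → ψ^[i] p ≠ ψ^[j] p := fun i j hij hjt =>
    brel_ne (brel_chain CH i j hij hjt)
  have PER : ψ^[t + 1] p = p := by
    rw [Function.iterate_succ_apply', tmax]
  have CLAIM : ∀ s (x : BPath V E sE rE), inA x → ψ^[s] x = xmax →
      ∃ i, i ≤ t ∧ x = ψ^[i] p := by
    intro s
    induction s with
    | zero =>
      intro x hx h
      simp only [Function.iterate_zero_apply] at h
      exact ⟨t, le_rfl, by rw [tmax]; exact h⟩
    | succ s ih =>
      intro x hx h
      rw [Function.iterate_succ_apply] at h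
      have hpsiA : inA (ψ x) := by
        by_cases hxm : x = xmax
        · rw [hxm]; exact pA
        · exact stepA x hx hxm
      obtain ⟨i, hit, hxi⟩ := ih (ψ x) hpsiA h
      cases i with
      | zero =>
        simp only [Function.iterate_zero_apply] at hxi
        by_cases hxm : x = xmax
        · exact ⟨t, le_rfl, by rw [tmax]; exact hxm⟩
        · exact absurd hxi (step_ne_p x hx hxm)
      | succ i =>
        rw [Function.iterate_succ_apply'] at hxi
        by_cases hxm : x = xmax
        · exfalso
          have hpe : p = ψ^[i + 1] p := by
            rw [Function.iterate_succ_apply', ← hxi, hxm]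
          exact NE 0 (i + 1) (by omega) hit (by simpa using hpe)
        · have hxeq := INJ x (ψ^[i] p) hx (ORBA i (by omega)) hxm (tmin i (by omega)) hxi
          exact ⟨i, by omega, hxeq⟩
  have SURJ : ∀ x : BPath V E sE rE, inA x → ∃ i, i ≤ t ∧ x = ψ^[i] p := fun x hx =>
    let ⟨s, hs⟩ := HIT x hx
    CLAIM s x hx hs
  have bij : Function.Bijective
      (fun i : Fin (t + 1) => (⟨ψ^[i.1] p, ORBA i.1 (Nat.lt_succ_iff.mp i.2)⟩ :
        {x // inA x})) := by
    constructor
    · intro i j hij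
      have hval := congrArg Subtype.val hij
      simp only at hval
      by_contra hne
      have hne' : i.1 ≠ j.1 := fun h => hne (Fin.ext h)
      rcases lt_or_gt_of_ne hne' with h | h
      · exact NE i.1 j.1 h (Nat.lt_succ_iff.mp j.2) hval
      · exact NE j.1 i.1 h (Nat.lt_succ_iff.mp i.2) hval.symm
    · rintro ⟨x, hx⟩
      obtain ⟨i, hit, hxi⟩ := SURJ x hx
      exact ⟨⟨i, by omega⟩, by simp [hxi.symm]⟩
  have cardA : Nat.card {x // inA x} = t + 1 := by
    rw [← Nat.card_eq_of_bijective _ bij, Nat.card_eq_fintype_card, Fintype.card_fin]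
  have cardL : Nat.card {x // inA x} = L := by
    have hct := card_tailset hssur hrsur n p
    have he : ∀ x : BPath V E sE rE, (∀ m, n ≤ m → x.1 m = p.1 m) ↔ inA x := by
      intro x
      constructor
      · intro h m hm; rw [h m hm, P1 m hm]
      · intro h m hm; rw [h m hm, P1 m hm]
    rw [Nat.card_congr (Equiv.subtypeEquivRight he)] at hct
    rw [hct, hLdef]
    congr 2
    exact P1 n le_rfl
  have hLt : L = t + 1 := by rw [← cardA, cardL]
  refine ⟨p, ?_, ?_, ?_⟩
  · rw [hLt]
    exact PER
  · intro j hj0 hjL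
    rw [hLt] at hjL
    intro hco
    exact NE 0 j hj0 (by omega) (by simpa using hco.symm)
  · ext x
    simp only [Set.mem_setOf_eq]
    constructor
    · intro hsrc
      have hxA : inA x := by
        intro m hm
        apply huniq m hm
        rw [← x.2 m, hsrc (m + 1) (by omega), hcpath m hm]
      obtain ⟨i, hit, hxi⟩ := SURJ x hxA
      exact ⟨i, by omega, hxi⟩
    · rintro ⟨i, hiL, rfl⟩
      intro m hm
      rw [ORBA i (by omega) m hm]
end
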